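/- arXiv:1706.02858 — 7 statements merged into one kernel-verified Lean document; each statement's English description precedes it below -/
import Mathlib

section
/- Let $G:\mathbb{N}\to[0,1]$ be nonincreasing with $\liminf_{j\to\infty} j\,G(j) = l > 1$, let $p \in (0,1]$ with $p > 1/l$, and set $g(j) = 1 - p\,G(j)$. Then the series $\sum_{i=1}^{\infty} \prod_{l=1}^{i-1} g(l)$ converges. -/
open Filter
open scoped ENNReal

/-! Write `u n = ∏_{1 ≤ j < n} (1 - p G(j))`. Since `liminf n G(n) > 1 / p`, there is `c > 1` with
`n p G(n) > c` eventually, hence `n u (n + 1) ≤ (n - c) u n`. This is Raabe's test: rearranged,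
`(c - 1) u n ≤ (n - 1) u n - n u (n + 1)`, so the partial sums of `∑ u n` are bounded by a
telescoping sum of nonnegative terms. -/

theorem summable_of_raabe_test {u : ℕ → ℝ} {c : ℝ} (hu : ∀ n, 0 ≤ u n) (hc : 1 < c)
    (h : ∀ᶠ n : ℕ in atTop, (n : ℝ) * u (n + 1) ≤ (n - c) * u n) : Summable u := by
  obtain ⟨N, hN⟩ := eventually_atTop.mp (h.and (eventually_ge_atTop 1))
  set w : ℕ → ℝ := fun k => ((k + N : ℕ) - 1 : ℝ) * u (k + N)
  have hstep : ∀ k, (c - 1) * u (k + N) ≤ w k - w (k + 1) := by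
    intro k
    have hk := (hN (k + N) (Nat.le_add_left N k)).1
    simp only [w, Nat.add_right_comm k 1 N]
    push_cast at hk ⊢
    linarith
  have hw : ∀ k, 0 ≤ w k := fun k =>
    mul_nonneg (sub_nonneg.mpr (by exact_mod_cast (hN (k + N) (Nat.le_add_left N k)).2)) (hu _)
  rw [← summable_nat_add_iff N]
  refine summable_of_sum_range_le (c := w 0 / (c - 1)) (fun k => hu _) fun n => ?_
  rw [le_div_iff₀ (sub_pos.mpr hc), Finset.sum_mul]
  calc ∑ k ∈ Finset.range n, u (k + N) * (c - 1)
      ≤ ∑ k ∈ Finset.range n, (w k - w (k + 1)) :=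
        Finset.sum_le_sum fun k _ => by linarith [hstep k]
    _ = w 0 - w n := Finset.sum_range_sub' w n
    _ ≤ w 0 := sub_le_self _ (hw n)

theorem nat_mul_prod_Ico_succ_le {a : ℕ → ℝ} {c : ℝ} {n : ℕ} (hn : 1 ≤ n)
    (hprod : 0 ≤ ∏ j ∈ Finset.Ico 1 n, (1 - a j)) (ha : c ≤ n * a n) :
    (n : ℝ) * ∏ j ∈ Finset.Ico 1 (n + 1), (1 - a j) ≤
      (n - c) * ∏ j ∈ Finset.Ico 1 n, (1 - a j) := by
  rw [Finset.prod_Ico_succ_top hn]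
  nlinarith

theorem exists_one_lt_eventually_lt_mul_of_inv_lt_liminf {x : ℕ → ℝ} {p : ℝ} (hp : 0 < p)
    (h : (ENNReal.ofReal p)⁻¹ < atTop.liminf (fun n => ENNReal.ofReal (x n))) :
    ∃ c, 1 < c ∧ ∀ᶠ n in atTop, c < p * x n := by
  obtain ⟨r, hpr, hr⟩ := exists_between h
  have hr_top : r ≠ ⊤ := (hr.trans_le le_top).ne
  rw [← ENNReal.ofReal_inv_of_pos hp, ENNReal.ofReal_lt_iff_lt_toReal (inv_nonneg.mpr hp.le) hr_top,
    inv_lt_iff_one_lt_mul₀' hp] at hpr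
  refine ⟨p * r.toReal, hpr, ?_⟩
  filter_upwards [eventually_lt_of_lt_liminf hr] with n hn
  exact mul_lt_mul_of_pos_left ((ENNReal.lt_ofReal_iff_toReal_lt hr_top).mp hn) hp

theorem stmt0_general (G : ℕ → ℝ) (hG01 : ∀ j, G j ∈ Set.Icc (0 : ℝ) 1)
    (l : ℝ≥0∞)
    (hliminf : Filter.atTop.liminf
      (fun j : ℕ => (j : ℝ≥0∞) * ENNReal.ofReal (G j)) = l)
    (p : ℝ) (hp : p ∈ Set.Ioc (0 : ℝ) 1)
    (hpl : 1 / l < ENNReal.ofReal p) :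
    Summable (fun i : ℕ => ∏ l' ∈ Finset.Ico 1 i, (1 - p * G l')) := by
  obtain ⟨hp0, hp1⟩ := hp
  have hfac : ∀ j, 0 ≤ 1 - p * G j := fun j => by
    nlinarith [(hG01 j).1, (hG01 j).2]
  have hprod : ∀ i, 0 ≤ ∏ j ∈ Finset.Ico 1 i, (1 - p * G j) := fun i =>
    Finset.prod_nonneg fun j _ => hfac j
  have hlim : (ENNReal.ofReal p)⁻¹ < atTop.liminf (fun j : ℕ => ENNReal.ofReal (j * G j)) := by
    simp_rw [ENNReal.ofReal_mul (Nat.cast_nonneg _), ENNReal.ofReal_natCast, hliminf]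
    rw [ENNReal.inv_lt_iff_inv_lt]
    simpa only [one_div] using hpl
  obtain ⟨c, hc1, hev⟩ := exists_one_lt_eventually_lt_mul_of_inv_lt_liminf hp0 hlim
  refine summable_of_raabe_test hprod hc1 ?_
  filter_upwards [hev, eventually_ge_atTop 1] with n hn hn1
  exact nat_mul_prod_Ico_succ_le hn1 (hprod n) (by linarith)

/-- If `G : ℕ → [0,1]` is nonincreasing with
`liminf_j j·G(j) = l > 1`, `p ∈ (0,1]` with `p > 1/l`, and `g(j) = 1 - p·G(j)`,
then `∑_{i≥1} ∏_{l=1}^{i-1} g(l)` converges. -/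
theorem stmt0 (G : ℕ → ℝ) (hG01 : ∀ j, G j ∈ Set.Icc (0 : ℝ) 1)
    (hmono : Antitone G) (l : ℝ≥0∞)
    (hliminf : Filter.atTop.liminf
      (fun j : ℕ => (j : ℝ≥0∞) * ENNReal.ofReal (G j)) = l)
    (hl : 1 < l) (p : ℝ) (hp : p ∈ Set.Ioc (0 : ℝ) 1)
    (hpl : 1 / l < ENNReal.ofReal p) :
    Summable (fun i : ℕ => ∏ l' ∈ Finset.Ico 1 i, (1 - p * G l')) :=
  stmt0_general G hG01 l hliminf p hp hpl
end

section
/- Let $G:\mathbb{N}\to[0,1]$ be nonincreasing with $\liminf_{j\to\infty} j\,G(j) = l > 1$, let $p \in (0,1]$ with $p > 1/l$, and set $g(j) = 1 - p\,G(j)$. Then the double series $\sum_{i=1}^{\infty} \sum_{k=1}^{i-1} G(k) \prod_{l=1, l\ne k}^{i-1} g(l)$ converges. -/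
open Filter
open scoped ENNReal

/-!
With `S i = ∑_{1 ≤ k < i} G k`, each product is at most `exp (-p (S i - G k))`, so the `i`-th term is
at most `e^p · S i · exp (-p S i)`. Since `liminf j G(j) > 1/p`, eventually `G j ≥ c / j` with
`p c > 1`, hence `S i ≥ c log i - d`. Trading a small part of the exponent for the factor `S i`
(`x e^{-t x} ≤ 1/t`) leaves a bound `K i^{-β}` with `β > 1`.
-/

open Real Finset

lemma mul_exp_neg_mul_le_inv {t : ℝ} (ht : 0 < t) (x : ℝ) : x * exp (-(t * x)) ≤ t⁻¹ := by
  rw [exp_neg, ← div_eq_mul_inv, div_le_iff₀ (exp_pos _)]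
  calc x = t⁻¹ * (t * x) := by field_simp
    _ ≤ t⁻¹ * exp (t * x) := by gcongr; linarith [add_one_le_exp (t * x)]

lemma prod_one_sub_le_exp_neg_sum {ι : Type*} (s : Finset ι) {x : ι → ℝ}
    (hx : ∀ i ∈ s, x i ≤ 1) : ∏ i ∈ s, (1 - x i) ≤ exp (-∑ i ∈ s, x i) :=
  calc ∏ i ∈ s, (1 - x i) ≤ ∏ i ∈ s, exp (-x i) :=
        prod_le_prod (fun i hi => sub_nonneg.2 (hx i hi)) fun i _ => one_sub_le_exp_neg _
    _ = exp (-∑ i ∈ s, x i) := by rw [← sum_neg_distrib, exp_sum]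

lemma sum_mul_prod_erase_one_sub_mul_le {ι : Type*} [DecidableEq ι] (s : Finset ι) {f : ι → ℝ}
    {p : ℝ} (hf : ∀ i ∈ s, f i ∈ Set.Icc (0 : ℝ) 1) (hp : p ∈ Set.Icc (0 : ℝ) 1) :
    ∑ k ∈ s, f k * ∏ j ∈ s.erase k, (1 - p * f j)
      ≤ exp p * ((∑ k ∈ s, f k) * exp (-(p * ∑ k ∈ s, f k))) := by
  set S := ∑ k ∈ s, f k
  have hprod : ∀ k ∈ s, ∏ j ∈ s.erase k, (1 - p * f j) ≤ exp p * exp (-(p * S)) := by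
    intro k hk
    have hpf : p * f k ≤ p := mul_le_of_le_one_right hp.1 (hf k hk).2
    have herase : ∑ j ∈ s.erase k, p * f j = p * S - p * f k := by
      rw [← mul_sum, sum_erase_eq_sub hk, mul_sub]
    calc ∏ j ∈ s.erase k, (1 - p * f j) ≤ exp (-∑ j ∈ s.erase k, p * f j) :=
          prod_one_sub_le_exp_neg_sum _ fun j hj =>
            mul_le_one₀ hp.2 (hf j (mem_of_mem_erase hj)).1 (hf j (mem_of_mem_erase hj)).2
      _ ≤ exp p * exp (-(p * S)) := by
          rw [herase, ← exp_add]
          exact exp_le_exp.2 (by linarith)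
  calc ∑ k ∈ s, f k * ∏ j ∈ s.erase k, (1 - p * f j)
      ≤ ∑ k ∈ s, f k * (exp p * exp (-(p * S))) :=
        sum_le_sum fun k hk => mul_le_mul_of_nonneg_left (hprod k hk) (hf k hk).1
    _ = exp p * (S * exp (-(p * S))) := by rw [← sum_mul]; ring

lemma log_sub_log_le_sum_Ico_inv {m i : ℕ} (hm : 0 < m) (hmi : m ≤ i) :
    log i - log m ≤ ∑ j ∈ Ico m i, (j : ℝ)⁻¹ := by
  induction i, hmi using Nat.le_induction with
  | base => simp
  | succ i hmi ih =>
    have hi : (0 : ℝ) < i := by exact_mod_cast hm.trans_le hmi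
    have hstep : log (i + 1) - log i ≤ (i : ℝ)⁻¹ := by
      rw [← log_div (by positivity) hi.ne']
      calc log ((i + 1) / i) ≤ (i + 1) / i - 1 := log_le_sub_one_of_pos (by positivity)
        _ = (i : ℝ)⁻¹ := by field_simp; ring
    rw [sum_Ico_succ_top hmi]
    push_cast
    linarith

lemma exists_eventually_log_le_sum_Ico {G : ℕ → ℝ} (hG : ∀ j, 0 ≤ G j) {c : ℝ} (hc : 0 ≤ c)
    (h : ∀ᶠ j : ℕ in atTop, c ≤ j * G j) :
    ∃ d, ∀ᶠ i : ℕ in atTop, c * log i - d ≤ ∑ j ∈ Ico 1 i, G j := by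
  obtain ⟨m, hm⟩ := eventually_atTop.1 h
  set m' := max m 1
  have hm' : 0 < m' := lt_max_of_lt_right one_pos
  refine ⟨c * log m', ?_⟩
  filter_upwards [eventually_ge_atTop m'] with i hi
  have hinv : ∀ j ∈ Ico m' i, c * (j : ℝ)⁻¹ ≤ G j := by
    intro j hj
    have hj := (mem_Ico.1 hj).1
    rw [← div_eq_mul_inv, div_le_iff₀' (by exact_mod_cast hm'.trans_le hj)]
    exact hm j (le_of_max_le_left hj)
  calc c * log i - c * log m' = c * (log i - log m') := by ring
    _ ≤ c * ∑ j ∈ Ico m' i, (j : ℝ)⁻¹ :=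
        mul_le_mul_of_nonneg_left (log_sub_log_le_sum_Ico_inv hm' hi) hc
    _ ≤ ∑ j ∈ Ico m' i, G j := by rw [mul_sum]; exact sum_le_sum hinv
    _ ≤ ∑ j ∈ Ico 1 i, G j :=
        sum_le_sum_of_subset_of_nonneg (Ico_subset_Ico hm' le_rfl) fun j _ _ => hG j

lemma summable_mul_exp_neg_of_log_le {x : ℕ → ℝ} {p c d : ℝ} (hx0 : ∀ i, 0 ≤ x i)
    (hp : 0 < p) (hpc : 1 < p * c) (hx : ∀ᶠ i : ℕ in atTop, c * log i - d ≤ x i) :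
    Summable fun i => x i * exp (-(p * x i)) := by
  have hc : 0 < c := by nlinarith
  obtain ⟨β, hβ1, hβ⟩ := exists_between hpc
  set q := β / c
  have hq0 : 0 < q := by positivity
  have hqp : q < p := (div_lt_iff₀ hc).2 hβ
  have hqc : q * c = β := div_mul_cancel₀ _ hc.ne'
  have hsplit : ∀ y, y * exp (-(p * y)) ≤ (p - q)⁻¹ * exp (-(q * y)) := fun y =>
    calc y * exp (-(p * y)) = y * exp (-((p - q) * y)) * exp (-(q * y)) := by
          rw [mul_assoc, ← exp_add]; ring_nf
      _ ≤ (p - q)⁻¹ * exp (-(q * y)) :=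
          mul_le_mul_of_nonneg_right (mul_exp_neg_mul_le_inv (sub_pos.2 hqp) y) (exp_pos _).le
  refine Summable.of_norm_bounded_eventually_nat
    ((summable_nat_rpow.2 (neg_lt_neg hβ1)).mul_left ((p - q)⁻¹ * exp (q * d))) ?_
  filter_upwards [hx, eventually_gt_atTop 0] with i hi hi0
  rw [norm_of_nonneg (mul_nonneg (hx0 i) (exp_pos _).le)]
  calc x i * exp (-(p * x i)) ≤ (p - q)⁻¹ * exp (-(q * x i)) := hsplit _
    _ ≤ (p - q)⁻¹ * exp (q * d - β * log i) := by
        have hqx := mul_le_mul_of_nonneg_left hi hq0.le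
        rw [mul_sub, ← mul_assoc, hqc] at hqx
        gcongr
        linarith
    _ = (p - q)⁻¹ * exp (q * d) * (i : ℝ) ^ (-β) := by
        rw [rpow_def_of_pos (Nat.cast_pos.2 hi0), mul_assoc, ← exp_add]; ring_nf

lemma exists_one_lt_mul_eventually_le_mul_of_inv_liminf_lt {G : ℕ → ℝ} {p : ℝ} (hp : 0 < p)
    (h : 1 / atTop.liminf (fun j : ℕ => (j : ℝ≥0∞) * ENNReal.ofReal (G j)) < ENNReal.ofReal p) :
    ∃ c, 1 < p * c ∧ ∀ᶠ j : ℕ in atTop, c ≤ j * G j := by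
  rw [one_div, ENNReal.inv_lt_iff_inv_lt, ← ENNReal.ofReal_inv_of_pos hp] at h
  obtain ⟨c, -, hpc, hcl⟩ := ENNReal.lt_iff_exists_real_btwn.1 h
  refine ⟨c, ?_, ?_⟩
  · have := mul_lt_mul_of_pos_left (ENNReal.ofReal_lt_ofReal_iff'.1 hpc).1 hp
    rwa [mul_inv_cancel₀ hp.ne'] at this
  · filter_upwards [eventually_lt_of_lt_liminf hcl] with j hj
    rw [← ENNReal.ofReal_natCast, ← ENNReal.ofReal_mul (Nat.cast_nonneg j)] at hj
    exact (ENNReal.ofReal_lt_ofReal_iff'.1 hj).1.le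

theorem stmt1_general (G : ℕ → ℝ) (hG01 : ∀ j, G j ∈ Set.Icc (0 : ℝ) 1)
    (l : ℝ≥0∞)
    (hliminf : Filter.atTop.liminf
      (fun j : ℕ => (j : ℝ≥0∞) * ENNReal.ofReal (G j)) = l)
    (p : ℝ) (hp : p ∈ Set.Ioc (0 : ℝ) 1)
    (hpl : 1 / l < ENNReal.ofReal p) :
    Summable (fun i : ℕ =>
      ∑ k ∈ Finset.Ico 1 i, G k * ∏ l' ∈ (Finset.Ico 1 i).erase k, (1 - p * G l')) := by
  obtain ⟨hp0, hp1⟩ := hp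
  have hG0 : ∀ j, 0 ≤ G j := fun j => (hG01 j).1
  obtain ⟨c, hpc, hc⟩ := exists_one_lt_mul_eventually_le_mul_of_inv_liminf_lt hp0 (hliminf ▸ hpl)
  obtain ⟨d, hd⟩ := exists_eventually_log_le_sum_Ico hG0 (by nlinarith) hc
  have hS := summable_mul_exp_neg_of_log_le (fun i => sum_nonneg fun j _ => hG0 j) hp0 hpc hd
  refine (hS.mul_left (exp p)).of_nonneg_of_le (fun i => ?_) fun i =>
    sum_mul_prod_erase_one_sub_mul_le _ (fun j _ => hG01 j) ⟨hp0.le, hp1⟩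
  exact sum_nonneg fun k _ => mul_nonneg (hG0 k) <|
    prod_nonneg fun j _ => sub_nonneg.2 (mul_le_one₀ hp1 (hG0 j) (hG01 j).2)

/-- Under the same hypotheses as Statement 0, the double series
`∑_{i≥1} ∑_{k=1}^{i-1} G(k) ∏_{l=1, l≠k}^{i-1} g(l)` converges, where
`g(l) = 1 - p·G(l)`. -/
theorem stmt1 (G : ℕ → ℝ) (hG01 : ∀ j, G j ∈ Set.Icc (0 : ℝ) 1)
    (hmono : Antitone G) (l : ℝ≥0∞)
    (hliminf : Filter.atTop.liminf
      (fun j : ℕ => (j : ℝ≥0∞) * ENNReal.ofReal (G j)) = l)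
    (hl : 1 < l) (p : ℝ) (hp : p ∈ Set.Ioc (0 : ℝ) 1)
    (hpl : 1 / l < ENNReal.ofReal p) :
    Summable (fun i : ℕ =>
      ∑ k ∈ Finset.Ico 1 i, G k * ∏ l' ∈ (Finset.Ico 1 i).erase k, (1 - p * G l')) :=
  stmt1_general G hG01 l hliminf p hp hpl
end

section
/- Let $(X_i)_{i\ge 1}$ be i.i.d. Bernoulli($p$) and $(\rho_i)_{i\ge 1}$ i.i.d. $\mathbb{N}$-valued, independent of the $X_i$'s. Let $B_i$ be the event that there do NOT exist two distinct indices $j,k \le i$ with $X_j = X_k = 1$, $j + \rho_j \ge i$, and $k + \rho_k \ge i$ (i.e., site $i$ is covered by at most one open source). Then $\mathbb{P}(B_i) = \prod_{l=1}^{i-1} g_p(l)\Big[ g_p(0) + p + p(1-p)\sum_{k=1}^{i-1} \frac{G(k)}{g_p(k)} \Big]$, where $G(l) = \mathbb{P}(\rho \ge l)$ and $g_p(l) = 1 - pG(l)$. -/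
/-!
Site `j ∈ [1, i]` covers `i` when `X j = 1` and `j + ρ j ≥ i`, an event of probability
`q_j = p G(i - j)`; these events are independent. `B_i` says that the random set of sites
covering `i` is `∅` or a singleton `{j}`, which by independence have probabilities
`∏ (1 - q_l)` and `q_j ∏_{l ≠ j} (1 - q_l)`. Splitting off the site `j = i`, with `q_i = p`,
and reflecting `l ↦ i - l` turns the sum into the stated formula.
-/

open MeasureTheory ProbabilityTheory

namespace Finset

variable {ι : Type*} [DecidableEq ι]

theorem prod_one_sub_add_sum_mul_prod_erase_insert {R : Type*} [CommRing R] (q : ι → R)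
    {s : Finset ι} {a : ι} (ha : a ∉ s) :
    ∏ l ∈ insert a s, (1 - q l) + ∑ j ∈ insert a s, q j * ∏ l ∈ (insert a s).erase j, (1 - q l) =
      q a * ∏ l ∈ s, (1 - q l) +
        (1 - q a) * (∏ l ∈ s, (1 - q l) + ∑ j ∈ s, q j * ∏ l ∈ s.erase j, (1 - q l)) := by
  have herase : ∀ j ∈ s, ∏ l ∈ (insert a s).erase j, (1 - q l) =
      (1 - q a) * ∏ l ∈ s.erase j, (1 - q l) := fun j hj => by
    rw [erase_insert_of_ne (ne_of_mem_of_not_mem hj ha).symm,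
      prod_insert fun h => ha (mem_of_mem_erase h)]
  rw [prod_insert ha, sum_insert ha, erase_insert ha,
    sum_congr rfl fun j hj => by rw [herase j hj], mul_add, mul_sum]
  simp only [mul_left_comm (1 - q a)]
  ring

theorem prod_one_sub_add_sum_mul_prod_erase {K : Type*} [Field K] (q : ι → K) (s : Finset ι)
    (hq : ∀ j ∈ s, q j ≠ 1) :
    ∏ l ∈ s, (1 - q l) + ∑ j ∈ s, q j * ∏ l ∈ s.erase j, (1 - q l) =
      (∏ l ∈ s, (1 - q l)) * (1 + ∑ j ∈ s, q j / (1 - q j)) := by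
  have herase : ∀ j ∈ s, ∏ l ∈ s.erase j, (1 - q l) = (∏ l ∈ s, (1 - q l)) / (1 - q j) :=
    fun j hj => eq_div_of_mul_eq (sub_ne_zero.2 (hq j hj).symm) (by
      rw [mul_comm, mul_prod_erase s (fun l => 1 - q l) hj])
  rw [sum_congr rfl fun j hj => by rw [herase j hj], mul_add, mul_one, mul_sum]
  congr 1
  refine sum_congr rfl fun j _ => ?_
  ring

end Finset

namespace ProbabilityTheory

theorem iIndepFun.iIndepSet_preimage {Ω ι : Type*} {_ : MeasurableSpace Ω} {μ : Measure Ω}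
    {β : ι → Type*} {_ : ∀ l, MeasurableSpace (β l)} {f : ∀ l, Ω → β l}
    (h : iIndepFun f μ) (hf : ∀ l, Measurable (f l)) {T : ∀ l, Set (β l)}
    (hT : ∀ l, MeasurableSet (T l)) : iIndepSet (fun l => f l ⁻¹' T l) μ :=
  (iIndepSet_iff_meas_biInter fun l => hf l (hT l)).2 fun S =>
    h.measure_inter_preimage_eq_mul S fun l _ => hT l

section Occurring

variable {Ω ι : Type*}

open Classical in
noncomputable def occurring (s : Finset ι) (E : ι → Set Ω) (ω : Ω) : Finset ι :=
  {l ∈ s | ω ∈ E l}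

theorem occurring_subset (s : Finset ι) (E : ι → Set Ω) (ω : Ω) : occurring s E ω ⊆ s := by
  intro l
  simp only [occurring, Finset.mem_filter]
  exact And.left

theorem card_occurring_le_one_iff {s : Finset ι} {E : ι → Set Ω} {ω : Ω} :
    (occurring s E ω).card ≤ 1 ↔ ∀ j ∈ s, ω ∈ E j → ∀ k ∈ s, ω ∈ E k → j = k := by
  simp only [Finset.card_le_one, occurring, Finset.mem_filter, and_imp]

theorem preimage_occurring_singleton {s t : Finset ι} (E : ι → Set Ω) (ht : t ⊆ s) :
    occurring s E ⁻¹' {t} = ⋂ l ∈ s, {ω | ω ∈ E l ↔ l ∈ t} := by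
  ext ω
  simp only [Set.mem_preimage, Set.mem_singleton_iff, Finset.ext_iff, occurring,
    Finset.mem_filter, Set.mem_iInter, Set.mem_ofPred_eq]
  exact ⟨fun h l hl => by simpa [hl] using h l,
    fun h l => ⟨fun ⟨hl, hω⟩ => (h l hl).1 hω, fun hlt => ⟨ht hlt, (h l (ht hlt)).2 hlt⟩⟩⟩

variable [MeasurableSpace Ω] {μ : Measure Ω} {E : ι → Set Ω}

theorem measurableSet_preimage_occurring_singleton (hE : ∀ l, MeasurableSet (E l))
    {s t : Finset ι} (ht : t ⊆ s) : MeasurableSet (occurring s E ⁻¹' {t}) := by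
  rw [preimage_occurring_singleton E ht]
  refine Finset.measurableSet_biInter s fun l _ => ?_
  by_cases hl : l ∈ t <;> simp only [hl, iff_true, iff_false, Set.ofPred_mem_eq]
  exacts [hE l, (hE l).compl]

variable [DecidableEq ι] [IsProbabilityMeasure μ]

theorem iIndepSet.measureReal_preimage_occurring_singleton (hE : ∀ l, MeasurableSet (E l))
    (hind : iIndepSet E μ) {s t : Finset ι} (ht : t ⊆ s) :
    μ.real (occurring s E ⁻¹' {t}) =
      ∏ l ∈ s, if l ∈ t then μ.real (E l) else 1 - μ.real (E l) := by
  have hmem : ∀ l, MeasurableSet[MeasurableSpace.generateFrom {E l}] {ω | ω ∈ E l ↔ l ∈ t} := by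
    intro l
    have hEl := MeasurableSpace.measurableSet_generateFrom (Set.mem_singleton (E l))
    by_cases hl : l ∈ t <;> simp only [hl, iff_true, iff_false, Set.ofPred_mem_eq]
    exacts [hEl, hEl.compl]
  rw [preimage_occurring_singleton E ht, measureReal_def,
    (iIndepSet_iff E μ).1 hind s fun l _ => hmem l, ENNReal.toReal_prod]
  refine Finset.prod_congr rfl fun l _ => ?_
  by_cases hl : l ∈ t <;> simp only [hl, iff_true, iff_false, Set.ofPred_mem_eq, if_true, if_false]
  exacts [rfl, probReal_compl_eq_one_sub (hE l)]

theorem iIndepSet.measureReal_card_occurring_le_one (hE : ∀ l, MeasurableSet (E l))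
    (hind : iIndepSet E μ) (s : Finset ι) :
    μ.real {ω | (occurring s E ω).card ≤ 1} =
      ∏ l ∈ s, (1 - μ.real (E l)) +
        ∑ j ∈ s, μ.real (E j) * ∏ l ∈ s.erase j, (1 - μ.real (E l)) := by
  set T := insert ∅ (s.map ⟨singleton, Finset.singleton_injective⟩)
  have hT : ∀ t ∈ T, t ⊆ s := by simp [T]
  have hset : {ω | (occurring s E ω).card ≤ 1} = occurring s E ⁻¹' T := by
    ext ω
    rw [Set.mem_preimage, Finset.mem_coe, Finset.mem_insert, Finset.mem_map, Set.mem_ofPred_eq,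
      Nat.le_one_iff_eq_zero_or_eq_one, Finset.card_eq_zero, Finset.card_eq_one]
    refine or_congr_right ⟨fun ⟨j, hj⟩ => ⟨j, occurring_subset s E ω ?_, hj.symm⟩,
      fun ⟨j, _, hj⟩ => ⟨j, hj.symm⟩⟩
    exact hj ▸ Finset.mem_singleton_self j
  rw [hset, ← sum_measureReal_preimage_singleton T
      fun t ht => measurableSet_preimage_occurring_singleton hE (hT t ht),
    Finset.sum_insert (by simp), Finset.sum_map]
  congr 1
  · simp [hind.measureReal_preimage_occurring_singleton hE (Finset.empty_subset s)]
  refine Finset.sum_congr rfl fun j hj => ?_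
  rw [hind.measureReal_preimage_occurring_singleton hE (by simpa using hj),
    ← Finset.mul_prod_erase s _ hj]
  simp only [Function.Embedding.coeFn_mk, Finset.mem_singleton, if_true]
  congr 1
  exact Finset.prod_congr rfl fun l hl => if_neg (Finset.ne_of_mem_erase hl)

end Occurring

end ProbabilityTheory

section Firework

variable {Ω : Type*}

def covers (X : ℕ → Ω → Bool) (ρ : ℕ → Ω → ℕ) (j i : ℕ) : Set Ω :=
  {ω | X j ω = true ∧ i ≤ j + ρ j ω}

theorem measurableSet_covers [MeasurableSpace Ω] {X : ℕ → Ω → Bool} {ρ : ℕ → Ω → ℕ} {j : ℕ}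
    (hX : Measurable (X j)) (hρ : Measurable (ρ j)) (i : ℕ) : MeasurableSet (covers X ρ j i) :=
  hX.prodMk hρ (MeasurableSet.of_discrete (s := {x : Bool × ℕ | x.1 = true ∧ i ≤ j + x.2}))

theorem measureReal_covers [MeasurableSpace Ω] {μ : Measure Ω} {X : ℕ → Ω → Bool}
    {ρ : ℕ → Ω → ℕ} {j : ℕ} (h : IndepFun (X j) (ρ j) μ) (i : ℕ) :
    μ.real (covers X ρ j i) = μ.real {ω | X j ω = true} * μ.real {ω | i - j ≤ ρ j ω} := by
  have hcov : covers X ρ j i = X j ⁻¹' {true} ∩ ρ j ⁻¹' Set.Ici (i - j) := by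
    ext ω
    simp only [covers, Set.mem_ofPred_eq, Set.mem_inter_iff, Set.mem_preimage,
      Set.mem_singleton_iff, Set.mem_Ici, Nat.sub_le_iff_le_add']
  rw [hcov, measureReal_def, h.measure_inter_preimage_eq_mul _ _ (measurableSet_singleton _)
    measurableSet_Ici, ENNReal.toReal_mul]
  rfl

theorem setOf_not_exists_two_covers (X : ℕ → Ω → Bool) (ρ : ℕ → Ω → ℕ) (i : ℕ) :
    {ω | ¬ ∃ j k : ℕ, j ≠ k ∧ 1 ≤ j ∧ j ≤ i ∧ 1 ≤ k ∧ k ≤ i ∧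
        X j ω = true ∧ X k ω = true ∧ i ≤ j + ρ j ω ∧ i ≤ k + ρ k ω} =
      {ω | (occurring (Finset.Icc 1 i) (covers X ρ · i) ω).card ≤ 1} := by
  ext ω
  simp only [Set.mem_ofPred_eq, card_occurring_le_one_iff, Finset.mem_Icc, covers]
  constructor
  · rintro h j hj hXj k hk hXk
    by_contra hjk
    exact h ⟨j, k, hjk, hj.1, hj.2, hk.1, hk.2, hXj.1, hXk.1, hXj.2, hXk.2⟩
  · rintro h ⟨j, k, hjk, hj1, hji, hk1, hki, hXj, hXk, hρj, hρk⟩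
    exact hjk (h j ⟨hj1, hji⟩ ⟨hXj, hρj⟩ k ⟨hk1, hki⟩ ⟨hXk, hρk⟩)

theorem prod_one_sub_add_sum_mul_prod_erase_Icc_eq (p : ℝ) (hp0 : 0 ≤ p) (hp1 : p ≤ 1)
    (G g : ℕ → ℝ) (hG0 : G 0 = 1) (hG1 : ∀ k, G k ≤ 1) (hg : ∀ k, g k = 1 - p * G k) (i : ℕ) :
    ∏ l ∈ Finset.Icc 1 i, (1 - p * G (i - l)) +
        ∑ j ∈ Finset.Icc 1 i, p * G (i - j) * ∏ l ∈ (Finset.Icc 1 i).erase j, (1 - p * G (i - l)) =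
      (∏ l ∈ Finset.Ico 1 i, g l) *
        (g 0 + p + p * (1 - p) * ∑ k ∈ Finset.Ico 1 i, G k / g k) := by
  rcases i with _ | n
  · simp [hg, hG0]
  have hprod : ∏ l ∈ Finset.Ico 1 (n + 1), (1 - p * G (n + 1 - l)) =
      ∏ l ∈ Finset.Ico 1 (n + 1), g l := by
    simpa [hg] using Finset.prod_Ico_reflect (fun l => 1 - p * G l) 1 (Nat.le_succ (n + 1))
  rw [← Finset.Ico_insert_right (by omega), Finset.prod_one_sub_add_sum_mul_prod_erase_insert _
    (by simp), Nat.sub_self, hG0, mul_one, hg 0, hG0, mul_one]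
  -- `G k / g k` is junk when `g k = 0`; this forces `p = 1`, where its coefficient vanishes.
  rcases hp1.lt_or_eq with hp1 | rfl
  · have hq : ∀ j, p * G j ≠ 1 := fun j => ((mul_le_of_le_one_right hp0 (hG1 j)).trans_lt hp1).ne
    have hsum : ∑ j ∈ Finset.Ico 1 (n + 1), p * G (n + 1 - j) / (1 - p * G (n + 1 - j)) =
        p * ∑ k ∈ Finset.Ico 1 (n + 1), G k / g k := by
      simpa [hg, mul_div_assoc, Finset.mul_sum] using
        Finset.sum_Ico_reflect (fun k => p * G k / (1 - p * G k)) 1 (Nat.le_succ (n + 1))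
    rw [Finset.prod_one_sub_add_sum_mul_prod_erase _ _ fun j _ => hq _, hprod, hsum]
    ring
  · simp only [hprod]
    ring

end Firework

theorem stmt7_general {Ω : Type*} [MeasureSpace Ω] [IsProbabilityMeasure (ℙ : Measure Ω)]
    (p : ℝ) (hp : p ∈ Set.Ioc (0 : ℝ) 1) (X : ℕ → Ω → Bool) (ρ : ℕ → Ω → ℕ)
    (hXm : ∀ i, Measurable (X i)) (hρm : ∀ i, Measurable (ρ i))
    (hindep : iIndepFun (fun i ω => (X i ω, ρ i ω)) ℙ)
    (hpair : ∀ i, IndepFun (X i) (ρ i) ℙ)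
    (hX : ∀ i, ℙ {ω | X i ω = true} = ENNReal.ofReal p)
    (hρ : ∀ i, IdentDistrib (ρ i) (ρ 1) ℙ ℙ)
    (G g : ℕ → ℝ) (hG : ∀ n, G n = (ℙ {ω | n ≤ ρ 1 ω}).toReal)
    (hg : ∀ n, g n = 1 - p * G n)
    (i : ℕ) :
    (ℙ {ω | ¬ ∃ j k : ℕ, j ≠ k ∧ 1 ≤ j ∧ j ≤ i ∧ 1 ≤ k ∧ k ≤ i ∧
        X j ω = true ∧ X k ω = true ∧ i ≤ j + ρ j ω ∧ i ≤ k + ρ k ω}).toReal =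
      (∏ l ∈ Finset.Ico 1 i, g l) *
        (g 0 + p + p * (1 - p) * ∑ k ∈ Finset.Ico 1 i, G k / g k) := by
  obtain ⟨hp0, hp1⟩ := hp
  have hind : iIndepSet (covers X ρ · i) ℙ :=
    hindep.iIndepSet_preimage (T := fun j => {x | x.1 = true ∧ i ≤ j + x.2})
      (fun j => (hXm j).prodMk (hρm j)) fun _ => .of_discrete
  have hprob : ∀ j, (ℙ : Measure Ω).real (covers X ρ j i) = p * G (i - j) := fun j => by
    rw [measureReal_covers (hpair j), measureReal_def, hX, ENNReal.toReal_ofReal hp0.le,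
      measureReal_def, hG]
    congr 2
    exact (hρ j).measure_mem_eq measurableSet_Ici
  rw [← measureReal_def, setOf_not_exists_two_covers,
    hind.measureReal_card_occurring_le_one fun j => measurableSet_covers (hXm j) (hρm j) i]
  simp only [hprob]
  exact prod_one_sub_add_sum_mul_prod_erase_Icc_eq p hp0.le hp1 G g (by simp [hG])
    (fun k => hG k ▸ measureReal_le_one) hg i

/-- In the one-dimensional firework process among sceptics, the
probability `P(B_i)` that site `i` is covered by at most one open source (no two
distinct `j,k ≤ i` with `X_j = X_k = 1`, `j + ρ_j ≥ i`, `k + ρ_k ≥ i`) equals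
`∏_{l=1}^{i-1} g_p(l) · [g_p(0) + p + p(1-p) ∑_{k=1}^{i-1} G(k)/g_p(k)]`,
where `G(l) = P(ρ ≥ l)` and `g_p(l) = 1 - p·G(l)`. -/
theorem stmt7 {Ω : Type*} [MeasureSpace Ω] [IsProbabilityMeasure (ℙ : Measure Ω)]
    (p : ℝ) (hp : p ∈ Set.Ioc (0 : ℝ) 1) (X : ℕ → Ω → Bool) (ρ : ℕ → Ω → ℕ)
    (hXm : ∀ i, Measurable (X i)) (hρm : ∀ i, Measurable (ρ i))
    (hindep : iIndepFun (fun i ω => (X i ω, ρ i ω)) ℙ)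
    (hpair : ∀ i, IndepFun (X i) (ρ i) ℙ)
    (hX : ∀ i, ℙ {ω | X i ω = true} = ENNReal.ofReal p)
    (hρ : ∀ i, IdentDistrib (ρ i) (ρ 1) ℙ ℙ)
    (G g : ℕ → ℝ) (hG : ∀ n, G n = (ℙ {ω | n ≤ ρ 1 ω}).toReal)
    (hg : ∀ n, g n = 1 - p * G n)
    (i : ℕ) (hi : 1 ≤ i) :
    (ℙ {ω | ¬ ∃ j k : ℕ, j ≠ k ∧ 1 ≤ j ∧ j ≤ i ∧ 1 ≤ k ∧ k ≤ i ∧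
        X j ω = true ∧ X k ω = true ∧ i ≤ j + ρ j ω ∧ i ≤ k + ρ k ω}).toReal =
      (∏ l ∈ Finset.Ico 1 i, g l) *
        (g 0 + p + p * (1 - p) * ∑ k ∈ Finset.Ico 1 i, G k / g k) :=
  stmt7_general p hp X ρ hXm hρm hindep hpair hX hρ G g hG hg i
end

section
/- Consider the 2-dimensional model: i.i.d. Bernoulli($p$) variables $(X_{(i,j)})_{(i,j)\in\mathbb{N}^2}$ and i.i.d. $\mathbb{N}$-valued radii $(\rho_{(i,j)})$, independent. For $i \ge j$, the probability that the point $(i,j)$ is not covered by any box $(k,l) + [0,\rho_{(k,l)}]^2$ with $X_{(k,l)} = 1$ equals $\prod_{l=0}^{j-1} g_p(l)^{2l+1} \prod_{k=1}^{i-j} g_p(k+j-1)^{j}$, where $g_p(l) = 1 - p\,\mathbb{P}(\rho \ge l)$. -/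
open MeasureTheory ProbabilityTheory Finset

/-!
The events "site `s` covers `(i, j)`" are independent across the sites `(k, l)` of the rectangle
`[1, i] × [1, j]`, and the site `(k, l)` covers `(i, j)` exactly when `X (k, l) = 1` and
`ρ (k, l) ≥ max (i - k) (j - l)`, which has probability `p · G (max (i - k) (j - l))`. So the
probability of not being covered is `∏ g (max (i - k) (j - l))` over the rectangle. Counting the
sites by their `L^∞`-distance `t` to `(i, j)`: there are `2t + 1` of them for `t < j`, and `j` of
them for each `j ≤ t < i`.
-/

section GridProducts

variable {M : Type*} [CommMonoid M]

theorem prod_range_prod_range_max_self (g : ℕ → M) (n : ℕ) :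
    ∏ a ∈ range n, ∏ b ∈ range n, g (max a b) = ∏ t ∈ range n, g t ^ (2 * t + 1) := by
  induction n with
  | zero => simp
  | succ n ih =>
    have hrow : ∀ a ∈ range n,
        ∏ b ∈ range (n + 1), g (max a b) = (∏ b ∈ range n, g (max a b)) * g n := by
      intro a ha
      rw [prod_range_succ, max_eq_right (mem_range.mp ha).le]
    have hlast : ∏ b ∈ range (n + 1), g (max n b) = g n ^ (n + 1) := by
      rw [prod_congr rfl fun b hb => by rw [max_eq_left (Nat.lt_succ_iff.mp (mem_range.mp hb))],
        prod_const, card_range]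
    rw [prod_range_succ, prod_congr rfl hrow, prod_mul_distrib, ih, hlast, prod_const,
      card_range, prod_range_succ, mul_assoc, ← pow_add, show n + (n + 1) = 2 * n + 1 by ring]

theorem prod_range_prod_range_max (g : ℕ → M) {i j : ℕ} (hij : j ≤ i) :
    ∏ a ∈ range i, ∏ b ∈ range j, g (max a b) =
      (∏ t ∈ range j, g t ^ (2 * t + 1)) * ∏ t ∈ Ico j i, g t ^ j := by
  induction i, hij using Nat.le_induction with
  | base => simp [prod_range_prod_range_max_self]
  | succ i hji ih =>
    have hrow : ∏ b ∈ range j, g (max i b) = g i ^ j := by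
      rw [prod_congr rfl fun b hb => by
          rw [max_eq_left ((mem_range.mp hb).trans_le hji).le],
        prod_const, card_range]
    rw [prod_range_succ, ih, prod_Ico_succ_top hji, hrow, mul_assoc]

theorem prod_Icc_one_sub (f : ℕ → M) (n : ℕ) :
    ∏ k ∈ Icc 1 n, f (n - k) = ∏ a ∈ range n, f a := by
  apply prod_nbij' (fun k => n - k) (fun a => n - a) <;> intro k hk <;>
    simp only [mem_Icc, mem_range] at hk ⊢ <;> omega

theorem prod_Icc_one_add_sub_one (f : ℕ → M) (i j : ℕ) :
    ∏ k ∈ Icc 1 (i - j), f (k + j - 1) = ∏ t ∈ Ico j i, f t := by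
  apply prod_nbij' (fun k => k + j - 1) (fun t => t - j + 1) <;> intro k hk <;>
    simp only [mem_Icc, mem_Ico] at hk ⊢ <;> omega

theorem prod_Icc_prod_Icc_max_sub (g : ℕ → M) {i j : ℕ} (hij : j ≤ i) :
    ∏ s ∈ Icc 1 i ×ˢ Icc 1 j, g (max (i - s.1) (j - s.2)) =
      (∏ t ∈ range j, g t ^ (2 * t + 1)) * ∏ k ∈ Icc 1 (i - j), g (k + j - 1) ^ j := by
  rw [prod_product, prod_congr rfl fun k _ => prod_Icc_one_sub (fun b => g (max (i - k) b)) j,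
    prod_Icc_one_sub (fun a => ∏ b ∈ range j, g (max a b)) i, prod_range_prod_range_max g hij,
    prod_Icc_one_add_sub_one (fun t => g t ^ j)]

end GridProducts

section Coverage

variable {Ω ι : Type*} [MeasurableSpace Ω] {μ : Measure Ω}

theorem measureReal_not_hit [IsProbabilityMeasure μ] {X : Ω → Bool} {ρ : Ω → ℕ}
    (hX : Measurable X) (hρ : Measurable ρ) (hXρ : IndepFun X ρ μ) (n : ℕ) :
    μ.real {ω | ¬ (X ω = true ∧ n ≤ ρ ω)} =
      1 - μ.real {ω | X ω = true} * μ.real {ω | n ≤ ρ ω} := by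
  have hhit : {ω | X ω = true ∧ n ≤ ρ ω} = X ⁻¹' {true} ∩ ρ ⁻¹' {m | n ≤ m} := rfl
  have hmeas : MeasurableSet {ω | X ω = true ∧ n ≤ ρ ω} :=
    (hX (measurableSet_singleton true)).inter (hρ (Set.to_countable _).measurableSet)
  rw [← Set.compl_ofPred, probReal_compl_eq_one_sub hmeas, hhit, measureReal_def,
    hXρ.measure_inter_preimage_eq_mul _ _ (measurableSet_singleton true)
      (Set.to_countable _).measurableSet, ENNReal.toReal_mul]
  rfl

theorem measureReal_forall_not_hit {X : ι → Ω → Bool} {ρ : ι → Ω → ℕ}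
    (h : iIndepFun (fun s ω => (X s ω, ρ s ω)) μ) (S : Finset ι) (m : ι → ℕ) :
    μ.real {ω | ∀ s ∈ S, ¬ (X s ω = true ∧ m s ≤ ρ s ω)} =
      ∏ s ∈ S, μ.real {ω | ¬ (X s ω = true ∧ m s ≤ ρ s ω)} := by
  have hevent : {ω | ∀ s ∈ S, ¬ (X s ω = true ∧ m s ≤ ρ s ω)} =
      ⋂ s ∈ S, (fun ω => (X s ω, ρ s ω)) ⁻¹' {q | ¬ (q.1 = true ∧ m s ≤ q.2)} := by
    ext ω
    simp
  rw [hevent, measureReal_def, h.measure_inter_preimage_eq_mul S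
    fun s _ => (Set.to_countable _).measurableSet, ENNReal.toReal_prod]
  rfl

end Coverage

theorem stmt13_general {Ω : Type*} [MeasureSpace Ω] [IsProbabilityMeasure (ℙ : Measure Ω)]
    (p : ℝ) (hp : p ∈ Set.Ioo (0 : ℝ) 1)
    (X : ℕ × ℕ → Ω → Bool) (ρ : ℕ × ℕ → Ω → ℕ)
    (hXm : ∀ s, Measurable (X s)) (hρm : ∀ s, Measurable (ρ s))
    (hindep : iIndepFun (fun s ω => (X s ω, ρ s ω)) ℙ)
    (hpair : ∀ s, IndepFun (X s) (ρ s) ℙ)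
    (hX : ∀ s, ℙ {ω | X s ω = true} = ENNReal.ofReal p)
    (hρ : ∀ s, IdentDistrib (ρ s) (ρ (1, 1)) ℙ ℙ)
    (G g : ℕ → ℝ) (hG : ∀ n, G n = (ℙ {ω | n ≤ ρ (1, 1) ω}).toReal)
    (hg : ∀ n, g n = 1 - p * G n)
    (i j : ℕ) (hij : j ≤ i) :
    (ℙ {ω | ¬ ∃ k l : ℕ, 1 ≤ k ∧ 1 ≤ l ∧ k ≤ i ∧ l ≤ j ∧
        X (k, l) ω = true ∧ max (i - k) (j - l) ≤ ρ (k, l) ω}).toReal =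
      (∏ t ∈ Finset.range j, g t ^ (2 * t + 1)) *
        ∏ k ∈ Finset.Icc 1 (i - j), g (k + j - 1) ^ j := by
  have hsite : ∀ s n, (ℙ : Measure Ω).real {ω | ¬ (X s ω = true ∧ n ≤ ρ s ω)} = g n := by
    intro s n
    rw [measureReal_not_hit (hXm s) (hρm s) (hpair s), measureReal_def, hX,
      ENNReal.toReal_ofReal hp.1.le, measureReal_def, hg, hG]
    congr 3
    exact (hρ s).measure_mem_eq (s := {m | n ≤ m}) (Set.to_countable _).measurableSet
  have hevent : {ω | ¬ ∃ k l : ℕ, 1 ≤ k ∧ 1 ≤ l ∧ k ≤ i ∧ l ≤ j ∧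
      X (k, l) ω = true ∧ max (i - k) (j - l) ≤ ρ (k, l) ω} =
      {ω | ∀ s ∈ Icc 1 i ×ˢ Icc 1 j,
        ¬ (X s ω = true ∧ max (i - s.1) (j - s.2) ≤ ρ s ω)} := by
    ext ω
    simp only [Set.mem_ofPred_eq, mem_product, mem_Icc, Prod.forall]
    grind
  rw [← measureReal_def, hevent, measureReal_forall_not_hit hindep,
    ← prod_Icc_prod_Icc_max_sub g hij]
  exact prod_congr rfl fun s _ => hsite s _

/-- In the 2-dimensional Bernoulli coverage model, for `i ≥ j ≥ 1`,
the probability that the point `(i,j)` is not covered by any open box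
`(k,l) + [0, ρ_{(k,l)}]²` equals
`∏_{t=0}^{j-1} g_p(t)^{2t+1} · ∏_{k=1}^{i-j} g_p(k+j-1)^j`. -/
theorem stmt13 {Ω : Type*} [MeasureSpace Ω] [IsProbabilityMeasure (ℙ : Measure Ω)]
    (p : ℝ) (hp : p ∈ Set.Ioo (0 : ℝ) 1)
    (X : ℕ × ℕ → Ω → Bool) (ρ : ℕ × ℕ → Ω → ℕ)
    (hXm : ∀ s, Measurable (X s)) (hρm : ∀ s, Measurable (ρ s))
    (hindep : iIndepFun (fun s ω => (X s ω, ρ s ω)) ℙ)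
    (hpair : ∀ s, IndepFun (X s) (ρ s) ℙ)
    (hX : ∀ s, ℙ {ω | X s ω = true} = ENNReal.ofReal p)
    (hρ : ∀ s, IdentDistrib (ρ s) (ρ (1, 1)) ℙ ℙ)
    (G g : ℕ → ℝ) (hG : ∀ n, G n = (ℙ {ω | n ≤ ρ (1, 1) ω}).toReal)
    (hg : ∀ n, g n = 1 - p * G n)
    (i j : ℕ) (hj : 1 ≤ j) (hij : j ≤ i) :
    (ℙ {ω | ¬ ∃ k l : ℕ, 1 ≤ k ∧ 1 ≤ l ∧ k ≤ i ∧ l ≤ j ∧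
        X (k, l) ω = true ∧ max (i - k) (j - l) ≤ ρ (k, l) ω}).toReal =
      (∏ t ∈ Finset.range j, g t ^ (2 * t + 1)) *
        ∏ k ∈ Finset.Icc 1 (i - j), g (k + j - 1) ^ j :=
  stmt13_general p hp X ρ hXm hρm hindep hpair hX hρ G g hG hg i j hij
end

section
/- Let $\rho$ be an $\mathbb{N}$-valued random variable with $\liminf_{j\to\infty} j\,\mathbb{P}(\rho \ge j) > 0$ and $p \in (0,1)$. Consider i.i.d. Bernoulli($p$) variables $(X_{\mathbf{i}})_{\mathbf{i}\in\mathbb{N}^2}$ and i.i.d. copies $(\rho_{\mathbf{i}})$ of $\rho$, independent of the $X$'s. Then almost surely there exists $\mathbf{t} \in \mathbb{N}^2$ such that every point of $\mathbf{t} + \mathbb{N}^2$ lies in at least two distinct boxes $\mathbf{i} + [0,\rho_{\mathbf{i}}]^2$ with $X_{\mathbf{i}} = 1$. -/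
/-!
Fix a site `x`. A site `i ≤ x` covers `x` with probability `p · P(ρ ≥ max (x - i))`, and the
liminf hypothesis gives `P(ρ ≥ r) ≥ c / (r + 1)` for all `r`. Since
`max(a, b) + 1 ≤ (a + 1)(b + 1)`, the expected number of covering sites is at least
`p c · H(x₁ + 1) H(x₂ + 1) ≥ p c log(x₁ + 1) log(x₂ + 1)`, with `H` the harmonic numbers.
By independence, the probability that at most one of them covers `x` is at most
`(x₁ + 1)(x₂ + 1) · exp(1 - p c log(x₁ + 1) log(x₂ + 1))`, which is `O((x₁ + 1)⁻² (x₂ + 1)⁻²)` once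
both coordinates are large. This is summable over a quadrant, so Borel–Cantelli leaves almost
surely only finitely many badly covered sites there.
-/

open MeasureTheory ProbabilityTheory Filter Finset
open scoped ENNReal

lemma ProbabilityTheory.iIndepFun.iIndepSet_preimage_s17 {Ω ι : Type*} {m : MeasurableSpace Ω}
    {μ : Measure Ω} {β : ι → Type*} [∀ i, MeasurableSpace (β i)] {f : ∀ i, Ω → β i}
    (hf : iIndepFun f μ) (hfm : ∀ i, Measurable (f i)) {S : ∀ i, Set (β i)}
    (hS : ∀ i, MeasurableSet (S i)) :
    iIndepSet (fun i ↦ f i ⁻¹' S i) μ :=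
  (iIndepSet_iff_meas_biInter fun i ↦ hfm i (hS i)).2 fun F ↦
    hf.measure_inter_preimage_eq_mul F fun i _ ↦ hS i

section AtMostOneOccurs

variable {Ω ι : Type*} {m : MeasurableSpace Ω} {μ : Measure Ω} {A : ι → Set Ω}

lemma ProbabilityTheory.iIndepSet.measureReal_biInter_compl (hA : iIndepSet A μ)
    (hAm : ∀ i, MeasurableSet (A i)) (F : Finset ι) :
    μ.real (⋂ i ∈ F, (A i)ᶜ) = ∏ i ∈ F, (1 - μ.real (A i)) := by
  have := hA.isProbabilityMeasure
  have hprod := (iIndepSet_iff A μ).1 hA F (f := fun i ↦ (A i)ᶜ) fun i _ ↦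
    (MeasurableSpace.measurableSet_generateFrom (Set.mem_singleton _)).compl
  rw [measureReal_def, hprod, ENNReal.toReal_prod]
  exact prod_congr rfl fun i _ ↦ probReal_compl_eq_one_sub (hAm i)

variable [DecidableEq ι] {F : Finset ι}

def atMostOneOccurs (F : Finset ι) (A : ι → Set Ω) : Set Ω :=
  ⋃ j ∈ F, ⋂ i ∈ F.erase j, (A i)ᶜ

lemma exists_ne_of_notMem_atMostOneOccurs {ω : Ω} (hF : F.Nonempty)
    (hω : ω ∉ atMostOneOccurs F A) : ∃ a ∈ F, ∃ b ∈ F, a ≠ b ∧ ω ∈ A a ∧ ω ∈ A b := by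
  simp only [atMostOneOccurs, Set.mem_iUnion, Set.mem_iInter, Set.mem_compl_iff, not_exists,
    not_forall, not_not] at hω
  obtain ⟨j, hj⟩ := hF
  obtain ⟨a, ha, haω⟩ := hω j hj
  obtain ⟨b, hb, hbω⟩ := hω a (mem_of_mem_erase ha)
  exact ⟨a, mem_of_mem_erase ha, b, mem_of_mem_erase hb, (ne_of_mem_erase hb).symm, haω, hbω⟩

lemma ProbabilityTheory.iIndepSet.measure_atMostOneOccurs_le (hA : iIndepSet A μ)
    (hAm : ∀ i, MeasurableSet (A i)) (F : Finset ι) :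
    μ (atMostOneOccurs F A) ≤ #F * ENNReal.ofReal (Real.exp (1 - ∑ i ∈ F, μ.real (A i))) := by
  have := hA.isProbabilityMeasure
  have hnone (j) (hj : j ∈ F) : μ (⋂ i ∈ F.erase j, (A i)ᶜ) ≤
      ENNReal.ofReal (Real.exp (1 - ∑ i ∈ F, μ.real (A i))) := by
    rw [← ofReal_measureReal, hA.measureReal_biInter_compl hAm]
    refine ENNReal.ofReal_le_ofReal ?_
    calc ∏ i ∈ F.erase j, (1 - μ.real (A i))
        ≤ ∏ i ∈ F.erase j, Real.exp (-μ.real (A i)) :=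
          prod_le_prod (fun i _ ↦ sub_nonneg.2 measureReal_le_one)
            fun i _ ↦ Real.one_sub_le_exp_neg _
      _ = Real.exp (μ.real (A j) - ∑ i ∈ F, μ.real (A i)) := by
          rw [← Real.exp_sum, ← sum_erase_add F _ hj, sum_neg_distrib]; ring_nf
      _ ≤ Real.exp (1 - ∑ i ∈ F, μ.real (A i)) := by
          gcongr; exact measureReal_le_one
  calc μ (atMostOneOccurs F A) ≤ ∑ j ∈ F, μ (⋂ i ∈ F.erase j, (A i)ᶜ) :=
        measure_biUnion_finset_le _ _
    _ ≤ ∑ _j ∈ F, ENNReal.ofReal (Real.exp (1 - ∑ i ∈ F, μ.real (A i))) := sum_le_sum hnone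
    _ = _ := by rw [sum_const, nsmul_eq_mul]

end AtMostOneOccurs

lemma exists_pos_div_le_of_liminf_pos {f : ℕ → ℝ≥0∞} (hf : Antitone f) (hfin : ∀ j, f j ≠ ∞)
    (h : 0 < liminf (fun j : ℕ ↦ (j : ℝ≥0∞) * f j) atTop) :
    ∃ c : ℝ, 0 < c ∧ ∀ r : ℕ, c / (r + 1) ≤ (f r).toReal := by
  obtain ⟨ε, hε0, hε⟩ := ENNReal.lt_iff_exists_nnreal_btwn.1 h
  obtain ⟨K, hK⟩ := eventually_atTop.1 (eventually_lt_of_lt_liminf hε)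
  have hε0 : (0 : ℝ) < ε := by exact_mod_cast hε0
  refine ⟨ε / (K + 1), by positivity, fun r ↦ ?_⟩
  set j := max r (K + 1)
  have hj0 : (0 : ℝ) < j := by exact_mod_cast (show 0 < j by omega)
  have hj : (j : ℝ) ≤ (K + 1) * (r + 1) := by
    rcases le_total r (K + 1) with hr | hr <;> simp [j, hr] <;> nlinarith
  have hεj : (ε : ℝ) ≤ j * (f j).toReal := by
    simpa using (ENNReal.toReal_le_toReal (by simp) (ENNReal.mul_ne_top (by simp) (hfin j))).2
      (hK j (by omega)).le
  calc (ε : ℝ) / (K + 1) / (r + 1) = ε / ((K + 1) * (r + 1)) := by rw [div_div]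
    _ ≤ ε / j := by gcongr
    _ ≤ (f j).toReal := by rw [div_le_iff₀ hj0]; linarith
    _ ≤ (f r).toReal := ENNReal.toReal_mono (hfin r) (hf (le_max_left _ _))

lemma sum_Iic_inv_add_one_sub (n : ℕ) :
    ∑ i ∈ Iic n, ((n + 1 - i : ℕ) : ℝ)⁻¹ = harmonic (n + 1) := by
  rw [← Nat.range_succ_eq_Iic, ← sum_range_reflect, harmonic]
  push_cast
  refine sum_congr rfl fun i hi ↦ ?_
  rw [show n + 1 - (n - i) = i + 1 by grind]
  push_cast
  rfl

lemma log_add_one_le_harmonic_add_one (n : ℕ) : Real.log (n + 1) ≤ harmonic (n + 1) :=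
  calc Real.log (n + 1) ≤ Real.log ↑(n + 1 + 1) := Real.log_le_log (by positivity) (by simp)
    _ ≤ harmonic (n + 1) := log_add_one_le_harmonic (n + 1)

lemma log_mul_log_le_sum_Iic (x : ℕ × ℕ) :
    Real.log (x.1 + 1) * Real.log (x.2 + 1) ≤
      ∑ i ∈ Iic x, ((x.1 + 1 - i.1 : ℕ) : ℝ)⁻¹ * ((x.2 + 1 - i.2 : ℕ) : ℝ)⁻¹ := by
  calc Real.log (x.1 + 1) * Real.log (x.2 + 1) ≤ harmonic (x.1 + 1) * (harmonic (x.2 + 1) : ℝ) :=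
        mul_le_mul (log_add_one_le_harmonic_add_one _) (log_add_one_le_harmonic_add_one _)
          (Real.log_nonneg (by simp))
          ((Real.log_nonneg (by simp)).trans (log_add_one_le_harmonic_add_one _))
    _ = _ := by
        rw [← sum_Iic_inv_add_one_sub, ← sum_Iic_inv_add_one_sub, sum_mul_sum, Iic_prod_def,
          sum_product]

lemma mul_mul_exp_one_sub_le {κ u v : ℝ} (hu : 1 ≤ u) (hv : 1 ≤ v)
    (hκu : 6 ≤ κ * Real.log u) (hκv : 6 ≤ κ * Real.log v) :
    u * v * Real.exp (1 - κ * (Real.log u * Real.log v)) ≤ Real.exp 1 / (u ^ 2 * v ^ 2) := by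
  have hlu := Real.log_nonneg hu
  have hlv := Real.log_nonneg hv
  have hexp (w : ℝ) (hw : 1 ≤ w) : Real.exp (3 * Real.log w) = w ^ 3 := by
    rw [show 3 * Real.log w = Real.log (w ^ 3) by rw [Real.log_pow]; norm_num,
      Real.exp_log (by positivity)]
  calc u * v * Real.exp (1 - κ * (Real.log u * Real.log v))
      ≤ u * v * Real.exp (1 - 3 * Real.log u - 3 * Real.log v) := by
        gcongr u * v * Real.exp ?_; nlinarith
    _ = Real.exp 1 / (u ^ 2 * v ^ 2) := by
        rw [sub_sub, Real.exp_sub, Real.exp_add, hexp u hu, hexp v hv]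
        field_simp

lemma summable_inv_add_one_sq_mul_inv_add_one_sq :
    Summable fun y : ℕ × ℕ ↦ (((y.1 : ℝ) + 1) ^ 2 * ((y.2 : ℝ) + 1) ^ 2)⁻¹ := by
  have h : Summable fun n : ℕ ↦ (((n : ℝ) + 1) ^ 2)⁻¹ := by
    simpa using (summable_nat_add_iff 1).2 (Real.summable_one_div_nat_pow.2 one_lt_two)
  simpa only [mul_inv] using h.mul_of_nonneg h (fun _ ↦ by positivity) fun _ ↦ by positivity

lemma ae_exists_forall_notMem_of_summable {Ω : Type*} {m : MeasurableSpace Ω} {μ : Measure Ω}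
    {s : ℕ × ℕ → Set Ω} {f : ℕ × ℕ → ℝ} (hf : Summable f) (N : ℕ)
    (hs : ∀ y : ℕ × ℕ, μ (s (N + y.1, N + y.2)) ≤ ENNReal.ofReal (f y)) :
    ∀ᵐ ω ∂μ, ∃ t : ℕ × ℕ, ∀ x : ℕ × ℕ, t.1 ≤ x.1 → t.2 ≤ x.2 → ω ∉ s x := by
  have hsum : ∑' y : ℕ × ℕ, μ (s (N + y.1, N + y.2)) ≠ ∞ :=
    ne_top_of_le_ne_top hf.tsum_ofReal_ne_top (ENNReal.tsum_le_tsum hs)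
  filter_upwards [ae_finite_setOfPred_mem hsum] with ω hω
  obtain ⟨t, ht⟩ := hω.bddAbove
  refine ⟨(N + t.1 + 1, N + t.2 + 1), fun x h1 h2 hx ↦ ?_⟩
  have hy : (x.1 - N, x.2 - N) ≤ t := ht (by
    rwa [Set.mem_ofPred_eq, Nat.add_sub_cancel' (by omega), Nat.add_sub_cancel' (by omega)])
  have := hy.1
  omega

section BoxCovering

variable {Ω : Type*} (X : ℕ × ℕ → Ω → Bool) (ρ : ℕ × ℕ → Ω → ℕ)

/-- For `i ≤ x`, the event that `i` is open and its box `i + [0, ρ i]²` contains `x`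
(for other `i` the truncated subtraction makes it meaningless). -/
def coverEvent (x i : ℕ × ℕ) : Set Ω :=
  {ω | X i ω = true ∧ max (x.1 - i.1) (x.2 - i.2) ≤ ρ i ω}

lemma coverEvent_eq_preimage (x i : ℕ × ℕ) :
    coverEvent X ρ x i =
      (fun ω ↦ (X i ω, ρ i ω)) ⁻¹' ({true} ×ˢ Set.Ici (max (x.1 - i.1) (x.2 - i.2))) := by
  ext; simp [coverEvent]

lemma exists_ne_covering_of_notMem_atMostOneOccurs {x : ℕ × ℕ} {ω : Ω}
    (hω : ω ∉ atMostOneOccurs (Iic x) (coverEvent X ρ x)) :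
    ∃ a b : ℕ × ℕ, a ≠ b ∧ X a ω = true ∧ X b ω = true ∧
      (a.1 ≤ x.1 ∧ x.1 ≤ a.1 + ρ a ω ∧ a.2 ≤ x.2 ∧ x.2 ≤ a.2 + ρ a ω) ∧
      (b.1 ≤ x.1 ∧ x.1 ≤ b.1 + ρ b ω ∧ b.2 ≤ x.2 ∧ x.2 ≤ b.2 + ρ b ω) := by
  obtain ⟨a, ha, b, hb, hab, ⟨hXa, hρa⟩, ⟨hXb, hρb⟩⟩ :=
    exists_ne_of_notMem_atMostOneOccurs nonempty_Iic hω
  rw [mem_Iic, Prod.le_def] at ha hb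
  rw [max_le_iff] at hρa hρb
  exact ⟨a, b, hab, hXa, hXb, by omega, by omega⟩

variable {X ρ} [MeasurableSpace Ω] {μ : Measure Ω}

lemma iIndepSet_coverEvent (hXm : ∀ s, Measurable (X s)) (hρm : ∀ s, Measurable (ρ s))
    (hindep : iIndepFun (fun s ω ↦ (X s ω, ρ s ω)) μ) (x : ℕ × ℕ) :
    iIndepSet (coverEvent X ρ x) μ := by
  simp_rw [funext (coverEvent_eq_preimage X ρ x)]
  exact hindep.iIndepSet_preimage_s17 (fun s ↦ (hXm s).prodMk (hρm s))
    fun _ ↦ (measurableSet_singleton _).prod measurableSet_Ici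

lemma measurableSet_coverEvent (hXm : ∀ s, Measurable (X s)) (hρm : ∀ s, Measurable (ρ s))
    (x i : ℕ × ℕ) : MeasurableSet (coverEvent X ρ x i) := by
  rw [coverEvent_eq_preimage]
  exact ((hXm i).prodMk (hρm i)) ((measurableSet_singleton _).prod measurableSet_Ici)

lemma measureReal_coverEvent {p : ℝ} (hp : 0 ≤ p) {ρ₀ : Ω → ℕ}
    (hpair : ∀ s, IndepFun (X s) (ρ s) μ)
    (hX : ∀ s, μ {ω | X s ω = true} = ENNReal.ofReal p)
    (hρ : ∀ s, IdentDistrib (ρ s) ρ₀ μ μ) (x i : ℕ × ℕ) :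
    μ.real (coverEvent X ρ x i) = p * μ.real {ω | max (x.1 - i.1) (x.2 - i.2) ≤ ρ₀ ω} := by
  have hinter : coverEvent X ρ x i =
      X i ⁻¹' {true} ∩ ρ i ⁻¹' Set.Ici (max (x.1 - i.1) (x.2 - i.2)) := by
    ext; simp [coverEvent]
  rw [measureReal_def, hinter, (hpair i).measure_inter_preimage_eq_mul _ _
    (measurableSet_singleton _) measurableSet_Ici, (hρ i).measure_mem_eq measurableSet_Ici,
    show X i ⁻¹' {true} = {ω | X i ω = true} from rfl, hX i, ENNReal.toReal_mul,
    ENNReal.toReal_ofReal hp]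
  rfl

lemma mul_inv_le_measureReal_coverEvent {p c : ℝ} (hp : 0 ≤ p) (hc : 0 ≤ c) {ρ₀ : Ω → ℕ}
    (hpair : ∀ s, IndepFun (X s) (ρ s) μ)
    (hX : ∀ s, μ {ω | X s ω = true} = ENNReal.ofReal p)
    (hρ : ∀ s, IdentDistrib (ρ s) ρ₀ μ μ)
    (htail : ∀ r : ℕ, c / (r + 1) ≤ μ.real {ω | r ≤ ρ₀ ω}) {x i : ℕ × ℕ} (hi : i ≤ x) :
    p * c * (((x.1 + 1 - i.1 : ℕ) : ℝ)⁻¹ * ((x.2 + 1 - i.2 : ℕ) : ℝ)⁻¹) ≤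
      μ.real (coverEvent X ρ x i) := by
  set r := max (x.1 - i.1) (x.2 - i.2)
  have hr : r + 1 ≤ (x.1 + 1 - i.1) * (x.2 + 1 - i.2) := by
    rw [Prod.le_def] at hi
    rw [show x.1 + 1 - i.1 = (x.1 - i.1) + 1 by omega,
      show x.2 + 1 - i.2 = (x.2 - i.2) + 1 by omega]
    rcases le_total (x.1 - i.1) (x.2 - i.2) with h | h <;> simp [r, h]
  calc p * c * (((x.1 + 1 - i.1 : ℕ) : ℝ)⁻¹ * ((x.2 + 1 - i.2 : ℕ) : ℝ)⁻¹)
      ≤ p * (c / (r + 1)) := by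
        rw [← mul_inv, mul_assoc, ← div_eq_mul_inv]
        gcongr
        exact_mod_cast hr
    _ ≤ μ.real (coverEvent X ρ x i) := by
        rw [measureReal_coverEvent hp hpair hX hρ]; gcongr; exact htail r

lemma measure_atMostOneOccurs_coverEvent_le {p c : ℝ} (hp : 0 ≤ p) (hc : 0 ≤ c) {ρ₀ : Ω → ℕ}
    (hXm : ∀ s, Measurable (X s)) (hρm : ∀ s, Measurable (ρ s))
    (hindep : iIndepFun (fun s ω ↦ (X s ω, ρ s ω)) μ)
    (hpair : ∀ s, IndepFun (X s) (ρ s) μ)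
    (hX : ∀ s, μ {ω | X s ω = true} = ENNReal.ofReal p)
    (hρ : ∀ s, IdentDistrib (ρ s) ρ₀ μ μ)
    (htail : ∀ r : ℕ, c / (r + 1) ≤ μ.real {ω | r ≤ ρ₀ ω}) (x : ℕ × ℕ) :
    μ (atMostOneOccurs (Iic x) (coverEvent X ρ x)) ≤ ENNReal.ofReal ((x.1 + 1) * (x.2 + 1) *
      Real.exp (1 - p * c * (Real.log (x.1 + 1) * Real.log (x.2 + 1)))) := by
  have hsum : p * c * (Real.log (x.1 + 1) * Real.log (x.2 + 1)) ≤
      ∑ i ∈ Iic x, μ.real (coverEvent X ρ x i) := by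
    calc p * c * (Real.log (x.1 + 1) * Real.log (x.2 + 1))
        ≤ ∑ i ∈ Iic x, p * c * (((x.1 + 1 - i.1 : ℕ) : ℝ)⁻¹ * ((x.2 + 1 - i.2 : ℕ) : ℝ)⁻¹) := by
          rw [← mul_sum]; gcongr; exact log_mul_log_le_sum_Iic x
      _ ≤ ∑ i ∈ Iic x, μ.real (coverEvent X ρ x i) := sum_le_sum fun i hi ↦
          mul_inv_le_measureReal_coverEvent hp hc hpair hX hρ htail (mem_Iic.1 hi)
  refine ((iIndepSet_coverEvent hXm hρm hindep x).measure_atMostOneOccurs_le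
    (measurableSet_coverEvent hXm hρm x) _).trans ?_
  rw [card_Iic_prod, Nat.card_Iic, Nat.card_Iic, ← ENNReal.ofReal_natCast,
    ← ENNReal.ofReal_mul (by positivity)]
  refine ENNReal.ofReal_le_ofReal ?_
  push_cast
  gcongr

end BoxCovering

/-- positive half of Proposition 2.3(ii), d = 2: If
`liminf_j j·P(ρ ≥ j) > 0` and `p ∈ (0,1)`, then almost surely there exists
`t ∈ ℕ²` such that every point of `t + ℕ²` lies in at least two distinct open
boxes `i + [0, ρ_i]²`. -/
theorem stmt17 {Ω : Type*} [MeasureSpace Ω] [IsProbabilityMeasure (ℙ : Measure Ω)]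
    (p : ℝ) (hp : p ∈ Set.Ioo (0 : ℝ) 1)
    (X : ℕ × ℕ → Ω → Bool) (ρ : ℕ × ℕ → Ω → ℕ)
    (hXm : ∀ s, Measurable (X s)) (hρm : ∀ s, Measurable (ρ s))
    (hindep : iIndepFun (fun s ω => (X s ω, ρ s ω)) ℙ)
    (hpair : ∀ s, IndepFun (X s) (ρ s) ℙ)
    (hX : ∀ s, ℙ {ω | X s ω = true} = ENNReal.ofReal p)
    (hρ : ∀ s, IdentDistrib (ρ s) (ρ (1, 1)) ℙ ℙ)
    (hliminf : 0 < Filter.atTop.liminf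
      (fun j : ℕ => (j : ℝ≥0∞) * ℙ {ω | j ≤ ρ (1, 1) ω})) :
    ∀ᵐ ω ∂ℙ, ∃ t : ℕ × ℕ, ∀ x : ℕ × ℕ, t.1 ≤ x.1 → t.2 ≤ x.2 →
      ∃ a b : ℕ × ℕ, a ≠ b ∧ X a ω = true ∧ X b ω = true ∧
        (a.1 ≤ x.1 ∧ x.1 ≤ a.1 + ρ a ω ∧ a.2 ≤ x.2 ∧ x.2 ≤ a.2 + ρ a ω) ∧
        (b.1 ≤ x.1 ∧ x.1 ≤ b.1 + ρ b ω ∧ b.2 ≤ x.2 ∧ x.2 ≤ b.2 + ρ b ω) := by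
  obtain ⟨c, hc, htail⟩ := exists_pos_div_le_of_liminf_pos
    (f := fun j ↦ ℙ {ω | j ≤ ρ (1, 1) ω}) (fun _ _ hjk ↦ measure_mono fun _ ↦ hjk.trans)
    (fun _ ↦ measure_ne_top _ _) hliminf
  have hpc : 0 < p * c := mul_pos hp.1 hc
  obtain ⟨N, hN⟩ : ∃ N : ℕ, 6 ≤ p * c * Real.log (N + 1) := by
    obtain ⟨N, hN⟩ := exists_nat_ge (Real.exp (6 / (p * c)))
    refine ⟨N, ?_⟩
    rw [← div_le_iff₀' hpc, Real.le_log_iff_exp_le (by positivity)]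
    linarith
  have hlog (n : ℕ) : 6 ≤ p * c * Real.log ((N + n : ℕ) + 1) :=
    hN.trans (by gcongr; omega)
  let B (x : ℕ × ℕ) : Set Ω := atMostOneOccurs (Iic x) (coverEvent X ρ x)
  have hB (y : ℕ × ℕ) : ℙ (B (N + y.1, N + y.2)) ≤
      ENNReal.ofReal (Real.exp 1 * (((y.1 : ℝ) + 1) ^ 2 * ((y.2 : ℝ) + 1) ^ 2)⁻¹) := by
    refine (measure_atMostOneOccurs_coverEvent_le hp.1.le hc.le hXm hρm hindep hpair hX hρ
      htail _).trans (ENNReal.ofReal_le_ofReal ?_)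
    refine (mul_mul_exp_one_sub_le (le_add_of_nonneg_left (Nat.cast_nonneg _))
      (le_add_of_nonneg_left (Nat.cast_nonneg _)) (hlog y.1) (hlog y.2)).trans ?_
    rw [← div_eq_mul_inv]
    gcongr <;> simp
  filter_upwards [ae_exists_forall_notMem_of_summable
    (summable_inv_add_one_sq_mul_inv_add_one_sq.mul_left _) N hB] with ω ⟨t, ht⟩
  exact ⟨t, fun x h1 h2 ↦ exists_ne_covering_of_notMem_atMostOneOccurs X ρ (ht x h1 h2)⟩
end

section
/- Let $(X_{\mathbf{i}})_{\mathbf{i}\in\mathbb{N}^2}$ be i.i.d. Bernoulli($p$), $p>0$, and $(\rho_{\mathbf{i}})$ i.i.d. $\mathbb{N}$-valued, independent of the $X$'s, with $\mathbb{E}[\rho^2] = \infty$. For $n \ge 1$ let $L_n$ be the L-shaped set of sites $(k,l)$ with $\max(k,l)=n$, $1 \le k,l \le n$, and let $A_n$ be the event that some $\mathbf{i} \in L_n$ has $X_{\mathbf{i}}=1$ and $\rho_{\mathbf{i}} \ge n+1$. Then $\mathbb{P}(A_n) = 1 - (1 - p\,\mathbb{P}(\rho \ge n+1))^{2n-1}$,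 the $A_n$ are independent, and almost surely infinitely many $A_n$ occur. -/
open MeasureTheory ProbabilityTheory Filter Function
open scoped ENNReal

/-!
The shells `L_n = {max k l = n}` are disjoint and have `2n - 1` sites, so the events `A_n` are
measurable with respect to disjoint blocks of the independent family `(X, ρ)`, and
`P(A_n) = 1 - (1 - b_n)^(2n - 1)` with `b_n = p P(ρ ≥ n + 1)`. Since
`min (m b) 1 ≤ 2 (1 - (1 - b)^m)`, the series `∑ P(A_n)` diverges together with
`∑ (2n - 1) P(ρ ≥ n + 1) = E[(ρ - 1)²]`, which is infinite because `E[ρ²]` is. The second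
Borel–Cantelli lemma concludes.
-/

lemma one_sub_pow_mul_one_add_mul_le_one {r : ℝ} (h0 : 0 ≤ r) (h1 : r ≤ 1) (m : ℕ) :
    (1 - r) ^ m * (1 + m * r) ≤ 1 :=
  calc (1 - r) ^ m * (1 + m * r) ≤ (1 - r) ^ m * (1 + r) ^ m := by
        have : 0 ≤ 1 - r := by linarith
        gcongr
        exact one_add_mul_le_pow (by linarith) m
    _ = (1 - r ^ 2) ^ m := by rw [← mul_pow]; ring
    _ ≤ 1 := pow_le_one₀ (by nlinarith) (by nlinarith)

lemma min_mul_le_two_mul_one_sub_one_sub_pow {r : ℝ} (h0 : 0 ≤ r) (h1 : r ≤ 1) (m : ℕ) :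
    min (m * r) 1 ≤ 2 * (1 - (1 - r) ^ m) := by
  have key := one_sub_pow_mul_one_add_mul_le_one h0 h1 m
  have hpow : 0 ≤ (1 - r) ^ m := pow_nonneg (by linarith) m
  have hmr : 0 ≤ (m : ℝ) * r := by positivity
  rcases le_total ((m : ℝ) * r) 1 with h | h
  · rw [min_eq_left h]
    nlinarith [mul_nonneg hpow hmr]
  · rw [min_eq_right h]
    nlinarith [mul_le_mul_of_nonneg_left h hpow]

namespace ENNReal

lemma min_mul_le_two_mul_one_sub_one_sub_pow {b : ℝ≥0∞} (hb : b ≤ 1) (m : ℕ) :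
    min (m * b) 1 ≤ 2 * (1 - (1 - b) ^ m) := by
  obtain ⟨r, hr0, rfl⟩ : ∃ r, 0 ≤ r ∧ b = ENNReal.ofReal r :=
    ⟨b.toReal, toReal_nonneg, (ofReal_toReal (ne_top_of_le_ne_top one_ne_top hb)).symm⟩
  have hr1 : r ≤ 1 := by simpa using (ofReal_le_one.mp hb)
  have hpow : (1 - r) ^ m ≤ 1 := pow_le_one₀ (by linarith) (by linarith)
  rw [← ofReal_one, ← ofReal_sub _ hr0, ← ofReal_pow (by linarith), ← ofReal_sub _ (by positivity),
    ← ofReal_natCast, ← ofReal_mul (by positivity), ← ofReal_min, ← ofReal_ofNat,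
    ← ofReal_mul (by norm_num)]
  exact ofReal_le_ofReal (_root_.min_mul_le_two_mul_one_sub_one_sub_pow hr0 hr1 m)

lemma toReal_one_sub_one_sub_pow {b : ℝ≥0∞} (hb : b ≤ 1) (m : ℕ) :
    (1 - (1 - b) ^ m).toReal = 1 - (1 - b.toReal) ^ m := by
  rw [toReal_sub_of_le (pow_le_one₀ (zero_le) tsub_le_self) one_ne_top, toReal_pow,
    toReal_sub_of_le hb one_ne_top, toReal_one]

lemma tsum_min_one_eq_top {ι : Type*} {c : ι → ℝ≥0∞} (hc : ∀ i, c i ≠ ⊤)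
    (h : ∑' i, c i = ⊤) : ∑' i, min (c i) 1 = ⊤ := by
  by_contra hne
  have hfin : {i | 1 ≤ min (c i) 1}.Finite := finite_const_le_of_tsum_ne_top hne one_ne_zero
  have hle : ∀ i, c i ≤ min (c i) 1 + {i | 1 ≤ min (c i) 1}.indicator c i := by
    intro i
    by_cases hi : 1 ≤ c i
    · simp [hi]
    · simp [hi, (not_le.mp hi).le]
  refine absurd h (ne_top_of_le_ne_top ?_ (ENNReal.tsum_le_tsum hle))
  rw [ENNReal.tsum_add, ← tsum_subtype]
  have := hfin.fintype
  refine add_ne_top.mpr ⟨hne, ?_⟩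
  rw [tsum_fintype]
  exact sum_ne_top.mpr fun i _ => hc i

lemma tsum_one_sub_one_sub_pow_eq_top {ι : Type*} {b : ι → ℝ≥0∞} (hb : ∀ i, b i ≤ 1)
    {m : ι → ℕ} (h : ∑' i, m i * b i = ⊤) : ∑' i, (1 - (1 - b i) ^ m i) = ⊤ := by
  have hmin : ∑' i, min (m i * b i) 1 = ⊤ :=
    tsum_min_one_eq_top
      (fun i => mul_ne_top (natCast_ne_top _) (ne_top_of_le_ne_top one_ne_top (hb i))) h
  have : 2 * ∑' i, (1 - (1 - b i) ^ m i) = ⊤ := by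
    rw [← ENNReal.tsum_mul_left, ← top_le_iff, ← hmin]
    exact ENNReal.tsum_le_tsum fun i => min_mul_le_two_mul_one_sub_one_sub_pow (hb i) (m i)
  simpa [mul_eq_top] using this

end ENNReal

lemma Finset.sum_range_two_mul_add_one (k : ℕ) : ∑ n ∈ Finset.range k, (2 * n + 1) = k ^ 2 := by
  induction k with
  | zero => simp
  | succ k ih => rw [Finset.sum_range_succ, ih]; ring

section

variable {Ω : Type*} [MeasurableSpace Ω] {μ : Measure Ω}

lemma lintegral_natCast_sq_eq_tsum {f : Ω → ℕ} (hf : Measurable f) :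
    ∫⁻ ω, (f ω : ℝ≥0∞) ^ 2 ∂μ = ∑' n : ℕ, (2 * n + 1 : ℝ≥0∞) * μ {ω | n + 1 ≤ f ω} := by
  have hset : ∀ n : ℕ, MeasurableSet {ω | n + 1 ≤ f ω} := fun n => hf measurableSet_Ici
  have hpt : ∀ ω, (f ω : ℝ≥0∞) ^ 2 =
      ∑' n : ℕ, {ω | n + 1 ≤ f ω}.indicator (fun _ => (2 * n + 1 : ℝ≥0∞)) ω := by
    intro ω
    rw [tsum_eq_sum (s := Finset.range (f ω))
        fun n hn => Set.indicator_of_notMem (by simpa using hn) _,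
      Finset.sum_congr rfl fun n hn => Set.indicator_of_mem (by simpa using hn) _]
    exact_mod_cast (Finset.sum_range_two_mul_add_one (f ω)).symm
  simp_rw [hpt]
  rw [lintegral_tsum fun n => (measurable_const.indicator (hset n)).aemeasurable]
  simp_rw [lintegral_indicator_const (hset _)]

lemma lintegral_natCast_sub_one_sq_eq_top [IsFiniteMeasure μ] {f : Ω → ℕ}
    (h : ∫⁻ ω, (f ω : ℝ≥0∞) ^ 2 ∂μ = ⊤) : ∫⁻ ω, ((f ω - 1 : ℕ) : ℝ≥0∞) ^ 2 ∂μ = ⊤ := by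
  have hpt : ∀ ω, (f ω : ℝ≥0∞) ^ 2 ≤ 4 * ((f ω - 1 : ℕ) : ℝ≥0∞) ^ 2 + 1 := by
    intro ω
    have : f ω ^ 2 ≤ 4 * (f ω - 1) ^ 2 + 1 := by
      rcases Nat.eq_zero_or_eq_succ_pred (f ω) with h0 | h1
      · simp [h0]
      · rw [h1]; simp only [Nat.succ_sub_one]; nlinarith
    exact_mod_cast this
  have := (lintegral_mono (μ := μ) hpt).trans_eq (lintegral_add_right _ measurable_const)
  rw [h, lintegral_const_mul' _ _ (by norm_num), lintegral_const, top_le_iff] at this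
  by_contra hne
  exact ENNReal.add_ne_top.mpr ⟨ENNReal.mul_ne_top (by norm_num) hne, by simp⟩ this

lemma tsum_two_mul_add_one_mul_measure_eq_top [IsFiniteMeasure μ] {f : Ω → ℕ} (hf : Measurable f)
    (h : ∫⁻ ω, (f ω : ℝ≥0∞) ^ 2 ∂μ = ⊤) :
    ∑' n : ℕ, (2 * n + 1 : ℝ≥0∞) * μ {ω | n + 2 ≤ f ω} = ⊤ := by
  rw [← lintegral_natCast_sub_one_sq_eq_top h, lintegral_natCast_sq_eq_tsum (hf.sub_const 1)]
  refine tsum_congr fun n => ?_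
  congr 2
  ext ω
  change n + 2 ≤ f ω ↔ n + 1 ≤ f ω - 1
  omega

lemma tsum_one_sub_one_sub_mul_measure_pow_eq_top [IsFiniteMeasure μ] {f : Ω → ℕ}
    (hf : Measurable f) (h : ∫⁻ ω, (f ω : ℝ≥0∞) ^ 2 ∂μ = ⊤) {c : ℝ≥0∞} (hc0 : c ≠ 0)
    (hc : ∀ n : ℕ, c * μ {ω | n + 1 ≤ f ω} ≤ 1) :
    ∑' n : ℕ, (1 - (1 - c * μ {ω | n + 2 ≤ f ω}) ^ (2 * n + 1)) = ⊤ := by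
  refine ENNReal.tsum_one_sub_one_sub_pow_eq_top (fun n => hc (n + 1)) ?_
  push_cast
  simp only [mul_left_comm _ c, ENNReal.tsum_mul_left]
  rw [tsum_two_mul_add_one_mul_measure_eq_top hf h, ENNReal.mul_top hc0]

end

namespace ProbabilityTheory

variable {Ω ι κ : Type*} {mΩ : MeasurableSpace Ω} {μ : Measure Ω}

theorem iIndep.iIndepSet_of_measurableSet_biSup {m : ι → MeasurableSpace Ω} (h_le : ∀ i, m i ≤ mΩ)
    (h_indep : iIndep m μ) {T : κ → Set ι} (hT : Pairwise (Disjoint on T)) {E : κ → Set Ω}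
    (hE : ∀ k, MeasurableSet[⨆ i ∈ T k, m i] (E k)) : iIndepSet E μ := by
  classical
  have := h_indep.isProbabilityMeasure
  rw [iIndepSet_iff_meas_biInter fun k => iSup₂_le (fun i _ => h_le i) _ (hE k)]
  intro F
  induction F using Finset.cons_induction with
  | empty => simp
  | cons a F ha ih =>
    have hdisj : Disjoint (T a) (⋃ k ∈ F, T k) :=
      Set.disjoint_iUnion₂_right.mpr fun k hk => hT (ne_of_mem_of_not_mem hk ha).symm
    have hF : MeasurableSet[⨆ i ∈ ⋃ k ∈ F, T k, m i] (⋂ k ∈ F, E k) :=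
      .biInter F.countable_toSet fun k hk =>
        (biSup_mono (f := m) fun i hi => Set.mem_biUnion hk hi) _ (hE k)
    rw [Finset.cons_eq_insert, Finset.set_biInter_insert,
      (Indep_iff _ _ _).mp (indep_iSup_of_disjoint h_le h_indep hdisj) _ _ (hE a) hF, ih,
      Finset.prod_insert ha]

variable {β : ι → Type*} [∀ i, MeasurableSpace (β i)] {f : ∀ i, Ω → β i}

theorem iIndepFun.iIndepSet_biUnion_preimage (hf : iIndepFun f μ) (hfm : ∀ i, Measurable (f i))
    {S : κ → Finset ι} (hS : Pairwise (Disjoint on S)) {t : κ → ∀ i, Set (β i)}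
    (ht : ∀ k i, MeasurableSet (t k i)) : iIndepSet (fun k => ⋃ i ∈ S k, f i ⁻¹' t k i) μ :=
  hf.iIndep.iIndepSet_of_measurableSet_biSup (fun i => (hfm i).comap_le)
    (fun _ _ hkl => Finset.disjoint_coe.mpr (hS hkl)) fun k =>
      .biUnion (S k).countable_toSet fun i hi =>
        le_biSup (fun i => MeasurableSpace.comap (f i) inferInstance) hi _ ⟨t k i, ht k i, rfl⟩

theorem iIndepFun.measure_biUnion_preimage (hf : iIndepFun f μ) (hfm : ∀ i, Measurable (f i))
    (S : Finset ι) {t : ∀ i, Set (β i)} (ht : ∀ i, MeasurableSet (t i)) :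
    μ (⋃ i ∈ S, f i ⁻¹' t i) = 1 - ∏ i ∈ S, (1 - μ (f i ⁻¹' t i)) := by
  have := hf.isProbabilityMeasure
  have hcompl : μ (⋃ i ∈ S, f i ⁻¹' t i)ᶜ = ∏ i ∈ S, (1 - μ (f i ⁻¹' t i)) := by
    rw [Set.compl_iUnion₂, hf.meas_biInter (s := fun i => (f i ⁻¹' t i)ᶜ)
      fun i _ => ⟨(t i)ᶜ, (ht i).compl, rfl⟩]
    exact Finset.prod_congr rfl fun i _ => prob_compl_eq_one_sub (hfm i (ht i))
  rw [← hcompl, prob_compl_eq_one_sub (S.measurableSet_biUnion fun i _ => hfm i (ht i)),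
    ENNReal.sub_sub_cancel ENNReal.one_ne_top prob_le_one]

theorem iIndepSet.ae_infinite_setOf_mem {s : ℕ → Set Ω} (hsm : ∀ n, MeasurableSet (s n))
    (hs : iIndepSet s μ) (hs' : ∑' n, μ (s n) = ⊤) : ∀ᵐ ω ∂μ, {n | ω ∈ s n}.Infinite := by
  have := hs.isProbabilityMeasure
  have hlim : ∀ᵐ ω ∂μ, ω ∈ limsup s atTop :=
    (mem_ae_iff_prob_eq_one (.measurableSet_limsup hsm)).mpr (measure_limsup_eq_one hsm hs hs')
  filter_upwards [hlim] with ω hω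
  rwa [mem_limsup_iff_frequently_mem, Nat.frequently_atTop_iff_infinite] at hω

end ProbabilityTheory

def lShape (n : ℕ) : Finset (ℕ × ℕ) :=
  Finset.Icc 1 n ×ˢ Finset.Icc 1 n \ Finset.Icc 1 (n - 1) ×ˢ Finset.Icc 1 (n - 1)

lemma mem_lShape {n : ℕ} {s : ℕ × ℕ} : s ∈ lShape n ↔ 1 ≤ s.1 ∧ 1 ≤ s.2 ∧ max s.1 s.2 = n := by
  simp only [lShape, Finset.mem_sdiff, Finset.mem_product, Finset.mem_Icc]
  omega

lemma card_lShape (n : ℕ) : (lShape n).card = 2 * n - 1 := by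
  rw [lShape, Finset.card_sdiff_of_subset (Finset.product_subset_product
    (Finset.Icc_subset_Icc_right (n.sub_le 1)) (Finset.Icc_subset_Icc_right (n.sub_le 1)))]
  simp only [Finset.card_product, Nat.card_Icc, Nat.add_sub_cancel]
  rcases n with _ | n
  · rfl
  · rw [Nat.add_sub_cancel, show 2 * (n + 1) - 1 = 2 * n + 1 by omega]
    exact Nat.sub_eq_of_eq_add (by ring)

lemma pairwise_disjoint_lShape : Pairwise (Disjoint on lShape) := fun _ _ hmn =>
  Finset.disjoint_left.mpr fun _ hm hn =>
    hmn ((mem_lShape.mp hm).2.2.symm.trans (mem_lShape.mp hn).2.2)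

theorem stmt18_general {Ω : Type*} [MeasureSpace Ω] [IsProbabilityMeasure (ℙ : Measure Ω)]
    (p : ℝ) (hp : 0 < p)
    (X : ℕ × ℕ → Ω → Bool) (ρ : ℕ × ℕ → Ω → ℕ)
    (hXm : ∀ s, Measurable (X s)) (hρm : ∀ s, Measurable (ρ s))
    (hindep : iIndepFun (fun s ω => (X s ω, ρ s ω)) ℙ)
    (hpair : ∀ s, IndepFun (X s) (ρ s) ℙ)
    (hX : ∀ s, ℙ {ω | X s ω = true} = ENNReal.ofReal p)
    (hρ : ∀ s, IdentDistrib (ρ s) (ρ (1, 1)) ℙ ℙ)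
    (hmean : ∫⁻ ω, ((ρ (1, 1) ω : ℝ≥0∞)) ^ 2 ∂ℙ = ⊤)
    (A : ℕ → Set Ω)
    (hA : ∀ n, A n = {ω | ∃ s : ℕ × ℕ, 1 ≤ s.1 ∧ 1 ≤ s.2 ∧ max s.1 s.2 = n ∧
      X s ω = true ∧ n + 1 ≤ ρ s ω}) :
    (∀ n : ℕ, 1 ≤ n → (ℙ (A n)).toReal =
        1 - (1 - p * (ℙ {ω | n + 1 ≤ ρ (1, 1) ω}).toReal) ^ (2 * n - 1)) ∧
      iIndepSet (fun n : ℕ => A (n + 1)) ℙ ∧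
      ∀ᵐ ω ∂ℙ, {n : ℕ | 1 ≤ n ∧ ω ∈ A n}.Infinite := by
  set Y : ℕ × ℕ → Ω → Bool × ℕ := fun s ω => (X s ω, ρ s ω)
  have hYm : ∀ s, Measurable (Y s) := fun s => (hXm s).prodMk (hρm s)
  set t : ℕ → Set (Bool × ℕ) := fun n => {true} ×ˢ Set.Ici (n + 1)
  have ht : ∀ n, MeasurableSet (t n) := fun n => (measurableSet_singleton _).prod measurableSet_Ici
  have hAY : ∀ n, A n = ⋃ s ∈ lShape n, Y s ⁻¹' t n := fun n => by
    ext ω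
    simp only [hA, Set.mem_iUnion, mem_lShape, exists_prop, and_assoc]
    rfl
  set b : ℕ → ℝ≥0∞ := fun n => ENNReal.ofReal p * ℙ {ω | n + 1 ≤ ρ (1, 1) ω}
  have hsite : ∀ n s, ℙ (Y s ⁻¹' t n) = b n := fun n s => by
    rw [Set.mk_preimage_prod, (hpair s).measure_inter_preimage_eq_mul _ _
      (measurableSet_singleton _) measurableSet_Ici, (hρ s).measure_mem_eq measurableSet_Ici]
    exact congrArg (· * _) (hX s)
  have hb1 : ∀ n, b n ≤ 1 := fun n => hsite n (1, 1) ▸ prob_le_one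
  have hPA : ∀ n, ℙ (A n) = 1 - (1 - b n) ^ (2 * n - 1) := fun n => by
    rw [hAY, hindep.measure_biUnion_preimage hYm _ fun _ => ht n,
      Finset.prod_congr rfl fun s _ => by rw [hsite], Finset.prod_const, card_lShape]
  have hAm : ∀ n, MeasurableSet (A n) := fun n =>
    hAY n ▸ (lShape n).measurableSet_biUnion fun s _ => hYm s (ht n)
  have hindepA : iIndepSet (fun n => A (n + 1)) ℙ := by
    simp only [hAY]
    exact (hindep.iIndepSet_biUnion_preimage hYm pairwise_disjoint_lShape fun n _ => ht n).precomp
      (g := (· + 1)) (add_left_injective 1)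
  have hsum : ∑' n, ℙ (A (n + 1)) = ⊤ := by
    convert tsum_one_sub_one_sub_mul_measure_pow_eq_top (hρm (1, 1)) hmean
      (ENNReal.ofReal_pos.mpr hp).ne' hb1 using 3 with n
    rw [hPA, show 2 * (n + 1) - 1 = 2 * n + 1 by omega]
  refine ⟨fun n _ => ?_, hindepA, ?_⟩
  · rw [hPA, ENNReal.toReal_one_sub_one_sub_pow (hb1 n), ENNReal.toReal_mul,
      ENNReal.toReal_ofReal hp.le]
  · filter_upwards [hindepA.ae_infinite_setOf_mem (fun n => hAm (n + 1)) hsum] with ω hω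
    refine (hω.image (add_left_injective 1).injOn).mono ?_
    rintro _ ⟨n, hn, rfl⟩
    exact ⟨n.succ_pos, hn⟩

/-- core of Proposition 2.4, d = 2: With `E[ρ²] = ∞`, the events
`A_n = {∃ (k,l) with max(k,l) = n, 1 ≤ k,l ≤ n, X_{(k,l)} = 1, ρ_{(k,l)} ≥ n+1}`
satisfy `P(A_n) = 1 - (1 - p·P(ρ ≥ n+1))^{2n-1}` for `n ≥ 1`, the `A_n` (for
`n ≥ 1`) are independent, and almost surely infinitely many `A_n` occur. -/
theorem stmt18 {Ω : Type*} [MeasureSpace Ω] [IsProbabilityMeasure (ℙ : Measure Ω)]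
    (p : ℝ) (hp : 0 < p) (hp1 : p ≤ 1)
    (X : ℕ × ℕ → Ω → Bool) (ρ : ℕ × ℕ → Ω → ℕ)
    (hXm : ∀ s, Measurable (X s)) (hρm : ∀ s, Measurable (ρ s))
    (hindep : iIndepFun (fun s ω => (X s ω, ρ s ω)) ℙ)
    (hpair : ∀ s, IndepFun (X s) (ρ s) ℙ)
    (hX : ∀ s, ℙ {ω | X s ω = true} = ENNReal.ofReal p)
    (hρ : ∀ s, IdentDistrib (ρ s) (ρ (1, 1)) ℙ ℙ)
    (hmean : ∫⁻ ω, ((ρ (1, 1) ω : ℝ≥0∞)) ^ 2 ∂ℙ = ⊤)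
    (A : ℕ → Set Ω)
    (hA : ∀ n, A n = {ω | ∃ s : ℕ × ℕ, 1 ≤ s.1 ∧ 1 ≤ s.2 ∧ max s.1 s.2 = n ∧
      X s ω = true ∧ n + 1 ≤ ρ s ω}) :
    (∀ n : ℕ, 1 ≤ n → (ℙ (A n)).toReal =
        1 - (1 - p * (ℙ {ω | n + 1 ≤ ρ (1, 1) ω}).toReal) ^ (2 * n - 1)) ∧
      iIndepSet (fun n : ℕ => A (n + 1)) ℙ ∧
      ∀ᵐ ω ∂ℙ, {n : ℕ | 1 ≤ n ∧ ω ∈ A n}.Infinite :=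
  stmt18_general p hp X ρ hXm hρm hindep hpair hX hρ hmean A hA
end

section
/- Let $G:\mathbb{N}\to[0,1]$ be nonincreasing with $G(t)\to 0$ and $\liminf_{t\to\infty} tG(t) > \eta > 0$; let $p\in(0,1)$, $g(l) = 1 - pG(l)$, and $a$ with $e^{-p\eta} < a < 1$. Then the series $\sum_{t=N}^{\infty} \frac{G(t)}{g(t)} \sum_{i=t+1}^{\infty} \prod_{l=0}^{i-1} g(l)^{2l+1}$ converges, where $N$ is chosen so that $tG(t) > \eta$ and $(1 - p\eta/t)^t < a$ for all $t \ge N$. -/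
/-!
Past the index `N` every factor of the no-coverage product satisfies
`g(l)^(2l+1) ≤ g(l)^l ≤ (1 - pη/l)^l < a < 1`, while all factors lie in `[0, 1]`. Hence the
product up to `N + m` is at most `a^m`, the inner tail sum from `t + 1` is at most
`a^(t+1) / (1 - a)`, and since `G(t) / g(t) ≤ 1 / (1 - p)` the outer series is dominated by a
geometric one.
-/

open Filter Finset
open scoped ENNReal

section GeometricTail

variable {f : ℕ → ℝ} {N : ℕ} {a : ℝ}

theorem prod_range_add_le_pow (hf0 : ∀ l, 0 ≤ f l) (hf1 : ∀ l, f l ≤ 1)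
    (hfa : ∀ l, N ≤ l → f l ≤ a) (m : ℕ) : ∏ l ∈ range (N + m), f l ≤ a ^ m := by
  rw [prod_range_add]
  calc (∏ l ∈ range N, f l) * ∏ j ∈ range m, f (N + j)
      ≤ ∏ j ∈ range m, f (N + j) :=
        mul_le_of_le_one_left (prod_nonneg fun j _ => hf0 _)
          (prod_le_one (fun l _ => hf0 l) fun l _ => hf1 l)
    _ ≤ ∏ _j ∈ range m, a :=
        prod_le_prod (fun j _ => hf0 _) fun j _ => hfa _ (Nat.le_add_right N j)
    _ = a ^ m := by rw [prod_const, card_range]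

theorem tsum_prod_range_add_le (hf0 : ∀ l, 0 ≤ f l) (hf1 : ∀ l, f l ≤ 1)
    (hfa : ∀ l, N ≤ l → f l ≤ a) (ha : a < 1) (t : ℕ) :
    ∑' i, ∏ l ∈ range (N + t + i), f l ≤ a ^ t / (1 - a) := by
  have ha0 : 0 ≤ a := (hf0 N).trans (hfa N le_rfl)
  have hbound (i : ℕ) : ∏ l ∈ range (N + t + i), f l ≤ a ^ t * a ^ i := by
    rw [add_assoc, ← pow_add]
    exact prod_range_add_le_pow hf0 hf1 hfa (t + i)
  have hgeom := (summable_geometric_of_lt_one ha0 ha).mul_left (a ^ t)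
  calc ∑' i, ∏ l ∈ range (N + t + i), f l
      ≤ ∑' i, a ^ t * a ^ i :=
        (hgeom.of_nonneg_of_le (fun i => prod_nonneg fun l _ => hf0 l) hbound).tsum_le_tsum
          hbound hgeom
    _ = a ^ t / (1 - a) := by
        rw [tsum_mul_left, tsum_geometric_of_lt_one ha0 ha, div_eq_mul_inv]

end GeometricTail

theorem pow_two_mul_add_one_le_of_le_of_pow_lt {x y a : ℝ} {l : ℕ} (hx0 : 0 ≤ x)
    (hx1 : x ≤ 1) (hxy : x ≤ y) (hy : y ^ l < a) : x ^ (2 * l + 1) ≤ a :=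
  calc x ^ (2 * l + 1) ≤ x ^ l := pow_le_pow_of_le_one hx0 hx1 (by omega)
    _ ≤ y ^ l := pow_le_pow_left₀ hx0 hxy l
    _ ≤ a := hy.le

/-- At `l = 0` the bound holds because `η / 0 = 0`. -/
theorem one_sub_mul_le_one_sub_mul_div {G p η : ℝ} {l : ℕ} (hG : 0 ≤ G) (hp : 0 ≤ p)
    (hη : η < l * G) : 1 - p * G ≤ 1 - p * η / l := by
  rcases Nat.eq_zero_or_pos l with rfl | hl
  · simpa using mul_nonneg hp hG
  · have : η / l ≤ G := (div_le_iff₀ (by exact_mod_cast hl)).2 (by linarith)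
    rw [mul_div_assoc]
    linarith [mul_le_mul_of_nonneg_left this hp]

theorem div_one_sub_mul_le_inv_one_sub {G p : ℝ} (hG : G ∈ Set.Icc (0 : ℝ) 1)
    (hp : p ∈ Set.Ioo (0 : ℝ) 1) : G / (1 - p * G) ≤ (1 - p)⁻¹ := by
  rw [← one_div]
  exact div_le_div₀ zero_le_one hG.2 (by linarith [hp.2]) (by nlinarith [hG.2, hp.1])

theorem stmt19_general (G : ℕ → ℝ) (hG01 : ∀ t, G t ∈ Set.Icc (0 : ℝ) 1)
    (p : ℝ) (hp : p ∈ Set.Ioo (0 : ℝ) 1)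
    (η a : ℝ) (ha2 : a < 1)
    (N : ℕ) (hN : ∀ t : ℕ, N ≤ t →
      η < (t : ℝ) * G t ∧ (1 - p * η / (t : ℝ)) ^ t < a) :
    Summable (fun t : ℕ =>
      G (N + t) / (1 - p * G (N + t)) *
        ∑' i : ℕ, ∏ l ∈ Finset.range (N + t + 1 + i), (1 - p * G l) ^ (2 * l + 1)) := by
  have hg0 (l : ℕ) : 0 ≤ 1 - p * G l := by nlinarith [(hG01 l).1, (hG01 l).2, hp.1, hp.2]
  have hg1 (l : ℕ) : 1 - p * G l ≤ 1 := by nlinarith [(hG01 l).1, (hG01 l).2, hp.1, hp.2]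
  have hf0 (l : ℕ) : 0 ≤ (1 - p * G l) ^ (2 * l + 1) := pow_nonneg (hg0 l) _
  have hf1 (l : ℕ) : (1 - p * G l) ^ (2 * l + 1) ≤ 1 := pow_le_one₀ (hg0 l) (hg1 l)
  have hfa (l : ℕ) (hl : N ≤ l) : (1 - p * G l) ^ (2 * l + 1) ≤ a :=
    pow_two_mul_add_one_le_of_le_of_pow_lt (hg0 l) (hg1 l)
      (one_sub_mul_le_one_sub_mul_div (hG01 l).1 hp.1.le (hN l hl).1) (hN l hl).2
  have ha0 : 0 ≤ a := (hf0 N).trans (hfa N le_rfl)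
  refine Summable.of_nonneg_of_le (fun t => ?_) (fun t => ?_)
    ((summable_geometric_of_lt_one ha0 ha2).mul_left ((1 - p)⁻¹ * (a / (1 - a))))
  · exact mul_nonneg (div_nonneg (hG01 _).1 (hg0 _))
      (tsum_nonneg fun i => prod_nonneg fun l _ => hf0 l)
  · calc G (N + t) / (1 - p * G (N + t)) *
          ∑' i : ℕ, ∏ l ∈ range (N + (t + 1) + i), (1 - p * G l) ^ (2 * l + 1)
        ≤ (1 - p)⁻¹ * (a ^ (t + 1) / (1 - a)) :=
          mul_le_mul (div_one_sub_mul_le_inv_one_sub (hG01 _) hp)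
            (tsum_prod_range_add_le hf0 hf1 hfa ha2 (t + 1))
            (tsum_nonneg fun i => prod_nonneg fun l _ => hf0 l)
            (inv_nonneg.2 (by linarith [hp.2]))
      _ = (1 - p)⁻¹ * (a / (1 - a)) * a ^ t := by ring

/-- Step 7, diagonal sum: Under the stated conditions, the series
`∑_{t≥N} (G(t)/g(t)) ∑_{i≥t+1} ∏_{l=0}^{i-1} g(l)^{2l+1}` converges, where
`g(l) = 1 - p·G(l)` (the outer index is reparametrised as `t = N + t₀` and the
inner one as `i = t + 1 + i₀`). -/
theorem stmt19 (G : ℕ → ℝ) (hG01 : ∀ t, G t ∈ Set.Icc (0 : ℝ) 1)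
    (hmono : Antitone G) (hG0 : Tendsto G atTop (nhds 0))
    (p : ℝ) (hp : p ∈ Set.Ioo (0 : ℝ) 1)
    (η a : ℝ) (hη : 0 < η) (ha1 : Real.exp (-(p * η)) < a) (ha2 : a < 1)
    (hliminf : ENNReal.ofReal η < Filter.atTop.liminf
      (fun t : ℕ => (t : ℝ≥0∞) * ENNReal.ofReal (G t)))
    (N : ℕ) (hN : ∀ t : ℕ, N ≤ t →
      η < (t : ℝ) * G t ∧ (1 - p * η / (t : ℝ)) ^ t < a) :
    Summable (fun t : ℕ =>
      G (N + t) / (1 - p * G (N + t)) *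
        ∑' i : ℕ, ∏ l ∈ Finset.range (N + t + 1 + i), (1 - p * G l) ^ (2 * l + 1)) :=
  stmt19_general G hG01 p hp η a ha2 N hN
end
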